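/- arXiv:1609.01144 — 10 statements merged into one kernel-verified Lean document; each statement's English description precedes it below -/
import Mathlib

section
/- Assume Σ has at least 3 elements. A function f : Σ* → Σ* preserves all restricted congruences (is RCP) if and only if there exist n ∈ ℕ and words w₀, …, wₙ ∈ Σ* such that f(x) = w₀ x w₁ x ⋯ w_{n-1} x wₙ for all x ∈ Σ*. -/
/-!
A restricted congruence is the kernel of a substitution of words for letters, so an RCP function
`f` satisfies `h(f x) = h(f y)` whenever `h x = h y`. Renaming one of three letters `a, b, c` into
another shows that `f a`, `f b`, `f c` agree letter by letter except where they read `a`, `b`, `c`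
respectively, so they are the values at `a, b, c` of one polynomial `p x = w₀ x w₁ ⋯ x wₙ`, which
is itself RCP. Then `f x = p x` by induction on the length of `x`: for a letter `s`, the
substitution `s ↦ ε` (if `s` occurs in `x`) or `s ↦ x` (if not) identifies `x` with a shorter
word or with `s`, so `f x` and `p x` have the same image under a substitution fixing every letter
but `s`. Any two letters are fixed by the substitution for one of `a, b, c`, so these three
substitutions separate words.
-/

/-- A congruence on the free monoid `List S`: an equivalence relation compatible
with concatenation. -/
def IsCong {S : Type*} (r : List S → List S → Prop) : Prop :=
  Equivalence r ∧ ∀ x y u v : List S, r x y → r u v → r (x ++ u) (y ++ v)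

/-- A monoid homomorphism from the free monoid `List S` to itself. -/
def IsHom {S : Type*} (φ : List S → List S) : Prop :=
  φ [] = [] ∧ ∀ x y : List S, φ (x ++ y) = φ x ++ φ y

/-- `f` is congruence preserving. -/
def IsCP {S : Type*} (f : List S → List S) : Prop :=
  ∀ r : List S → List S → Prop, IsCong r → ∀ x y : List S, r x y → r (f x) (f y)

/-- `f` preserves all restricted congruences (kernels of endomorphisms of the free monoid). -/
def IsRCP {S : Type*} (f : List S → List S) : Prop :=
  ∀ φ : List S → List S, IsHom φ → ∀ x y : List S, φ x = φ y → φ (f x) = φ (f y)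

/-- `f x = w₀ x w₁ x ⋯ x wₙ` for fixed words `w₀, …, wₙ`. -/
def PolyForm {S : Type*} (f : List S → List S) : Prop :=
  ∃ (n : ℕ) (w : ℕ → List S), ∀ x : List S,
    f x = w 0 ++ List.flatten ((List.range n).map fun i => x ++ w (i + 1))

open Function

section

variable {S : Type*}

/-- `poly w₀ [w₁, …, wₙ] x = w₀ x w₁ x ⋯ x wₙ`. -/
def poly (w₀ : List S) (ws : List (List S)) (x : List S) : List S :=
  w₀ ++ (ws.map (x ++ ·)).flatten

theorem polyForm_iff {f : List S → List S} : PolyForm f ↔ ∃ w₀ ws, f = poly w₀ ws := by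
  constructor
  · rintro ⟨n, w, hf⟩
    exact ⟨w 0, (List.range n).map (w <| · + 1), funext fun x => by simp [hf, poly, comp_def]⟩
  · rintro ⟨w₀, ws, rfl⟩
    refine ⟨ws.length, fun i => (w₀ :: ws).getD i [], fun x => ?_⟩
    have hws : (List.range ws.length).map (fun i => x ++ (w₀ :: ws).getD (i + 1) []) =
        ws.map (x ++ ·) :=
      List.ext_getElem (by simp) fun i _ hi => by rw [List.length_map] at hi; simp [hi]
    simp only [poly, hws, List.getD_cons_zero]

theorem isHom_map (g : S → S) : IsHom (List.map g) :=
  ⟨rfl, fun _ _ => List.map_append⟩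

theorem isHom_flatMap (h : S → List S) : IsHom (·.flatMap h) :=
  ⟨rfl, fun _ _ => List.flatMap_append⟩

namespace IsHom

variable {φ : List S → List S}

theorem map_flatten (hφ : IsHom φ) (l : List (List S)) : φ l.flatten = (l.map φ).flatten := by
  induction l with
  | nil => exact hφ.1
  | cons x l ih => rw [List.flatten_cons, hφ.2, ih, List.map_cons, List.flatten_cons]

theorem map_poly (hφ : IsHom φ) (w₀ : List S) (ws : List (List S)) (x : List S) :
    φ (poly w₀ ws x) = poly (φ w₀) (ws.map φ) (φ x) := by
  simp only [poly, hφ.2, hφ.map_flatten, List.map_map]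
  congr 2
  exact List.map_congr_left fun w _ => hφ.2 x w

end IsHom

theorem isRCP_poly (w₀ : List S) (ws : List (List S)) : IsRCP (poly w₀ ws) := by
  intro φ hφ x y hxy
  rw [hφ.map_poly, hφ.map_poly, hxy]

theorem List.flatMap_update_singleton_nil [DecidableEq S] (s : S) (x : List S) :
    x.flatMap (update List.singleton s []) = x.filter (· ≠ s) := by
  induction x with
  | nil => rfl
  | cons t x ih => by_cases hts : t = s <;> simp [hts, ih, List.singleton]

theorem List.flatMap_update_singleton_of_not_mem [DecidableEq S] {s : S} (z : List S)
    {x : List S} (hs : s ∉ x) : x.flatMap (update List.singleton s z) = x := by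
  induction x with
  | nil => rfl
  | cons t x ih =>
    simp only [List.mem_cons, not_or] at hs
    simp [update_of_ne (Ne.symm hs.1), ih hs.2, List.singleton]

theorem List.eq_of_forall_exists_flatMap_eq {u v : List S}
    (huv : ∀ p q : S, ∃ h : S → List S, h p = [p] ∧ h q = [q] ∧ u.flatMap h = v.flatMap h) :
    u = v := by
  induction u generalizing v with
  | nil =>
    cases v with
    | nil => rfl
    | cons q v =>
      obtain ⟨h, -, hq, huv⟩ := huv q q
      simp [hq] at huv
  | cons p u ih =>
    cases v with
    | nil =>
      obtain ⟨h, hp, -, huv⟩ := huv p p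
      simp [hp] at huv
    | cons q v =>
      obtain ⟨h, hp, hq, hpq⟩ := huv p q
      simp only [List.flatMap_cons, hp, hq, List.singleton_append, List.cons.injEq] at hpq
      obtain ⟨rfl, -⟩ := hpq
      congr
      refine ih fun p' q' => ?_
      obtain ⟨h', hp', hq', huv'⟩ := huv p' q'
      exact ⟨h', hp', hq', by simpa using huv'⟩

theorem exists_mem_ne_ne {a b c : S} (hab : a ≠ b) (hac : a ≠ c) (hbc : b ≠ c) (p q : S) :
    ∃ s ∈ [a, b, c], s ≠ p ∧ s ≠ q := by
  simp only [List.mem_cons, List.not_mem_nil, or_false, exists_eq_or_imp, exists_eq_left]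
  grind

namespace IsRCP

variable {f g : List S → List S}

theorem flatMap_eq (hf : IsRCP f) (h : S → List S) {x y : List S}
    (hxy : x.flatMap h = y.flatMap h) : (f x).flatMap h = (f y).flatMap h :=
  hf _ (isHom_flatMap h) x y hxy

theorem flatMap_eq_of_eq (hf : IsRCP f) (hg : IsRCP g) (h : S → List S) {x y : List S}
    (hxy : x.flatMap h = y.flatMap h) (hy : f y = g y) :
    (f x).flatMap h = (g x).flatMap h := by
  rw [hf.flatMap_eq h hxy, hy, hg.flatMap_eq h hxy]

theorem exists_flatMap_eq [DecidableEq S] (hf : IsRCP f) (hg : IsRCP g) {s : S}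
    (hs : f [s] = g [s]) {x : List S} (ih : ∀ y : List S, y.length < x.length → f y = g y) :
    ∃ h : S → List S, (∀ t ≠ s, h t = [t]) ∧ (f x).flatMap h = (g x).flatMap h := by
  by_cases hsx : s ∈ x
  · refine ⟨update List.singleton s [], fun t ht => update_of_ne ht _ _, ?_⟩
    have hlt : (x.filter (· ≠ s)).length < x.length :=
      List.length_filter_lt_length_iff_exists.2 ⟨s, hsx, by simp⟩
    refine hf.flatMap_eq_of_eq hg _ ?_ (ih _ hlt)
    rw [List.flatMap_update_singleton_nil, List.flatMap_update_singleton_nil, List.filter_filter]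
    simp
  · refine ⟨update List.singleton s x, fun t ht => update_of_ne ht _ _, ?_⟩
    refine hf.flatMap_eq_of_eq hg _ ?_ hs
    simp [List.flatMap_update_singleton_of_not_mem x hsx]

theorem ext (hf : IsRCP f) (hg : IsRCP g) {a b c : S} (hab : a ≠ b) (hac : a ≠ c)
    (hbc : b ≠ c) (habc : ∀ s ∈ [a, b, c], f [s] = g [s]) : f = g := by
  classical
  funext x
  induction hn : x.length using Nat.strong_induction_on generalizing x with
  | _ n ih =>
    subst hn
    refine List.eq_of_forall_exists_flatMap_eq fun p q => ?_
    obtain ⟨s, hs, hsp, hsq⟩ := exists_mem_ne_ne hab hac hbc p q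
    obtain ⟨h, hfix, hfg⟩ := hf.exists_flatMap_eq hg (habc s hs) fun y hy => ih _ hy y rfl
    exact ⟨h, hfix p hsp.symm, hfix q hsq.symm, hfg⟩

theorem map_update_eq [DecidableEq S] (hf : IsRCP f) (s t : S) :
    (f [s]).map (update id s t) = (f [t]).map (update id s t) :=
  hf _ (isHom_map _) [s] [t] (by simp [update_apply])

end IsRCP

variable [DecidableEq S] {a b c : S}

theorem eq_and_eq_or_of_update_eq (hab : a ≠ b) (hac : a ≠ c) (hbc : b ≠ c) {p q r : S}
    (hpq : update id a b p = update id a b q) (hpr : update id a c p = update id a c r)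
    (hqr : update id b c q = update id b c r) : p = q ∧ p = r ∨ p = a ∧ q = b ∧ r = c := by
  simp only [update_apply, id] at hpq hpr hqr
  split_ifs at hpq hpr hqr <;> grind

-- The positions where the three words read `a`, `b`, `c` are the holes of the polynomial.
theorem exists_poly_of_map_update_eq (hab : a ≠ b) (hac : a ≠ c) (hbc : b ≠ c) :
    ∀ {u v w : List S}, u.map (update id a b) = v.map (update id a b) →
      u.map (update id a c) = w.map (update id a c) →
      v.map (update id b c) = w.map (update id b c) →
      ∃ w₀ ws, u = poly w₀ ws [a] ∧ v = poly w₀ ws [b] ∧ w = poly w₀ ws [c]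
  | [], v, w, huv, huw, _ => by
    rw [List.map_nil, eq_comm, List.map_eq_nil_iff] at huv huw
    exact ⟨[], [], by simp [poly, huv, huw]⟩
  | p :: u, q :: v, r :: w, huv, huw, hvw => by
    simp only [List.map_cons, List.cons.injEq] at huv huw hvw
    obtain ⟨w₀, ws, hu, hv, hw⟩ := exists_poly_of_map_update_eq hab hac hbc huv.2 huw.2 hvw.2
    rcases eq_and_eq_or_of_update_eq hab hac hbc huv.1 huw.1 hvw.1 with
      ⟨rfl, rfl⟩ | ⟨rfl, rfl, rfl⟩
    · exact ⟨p :: w₀, ws, by simp [poly, hu, hv, hw]⟩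
    · exact ⟨[], w₀ :: ws, by simp [poly, hu, hv, hw]⟩
  | _ :: _, [], _, huv, _, _ | _ :: _, _, [], _, huw, _ => by simp_all

theorem IsRCP.exists_poly_singleton {f : List S → List S} (hf : IsRCP f)
    (hab : a ≠ b) (hac : a ≠ c) (hbc : b ≠ c) :
    ∃ w₀ ws, ∀ s ∈ [a, b, c], f [s] = poly w₀ ws [s] := by
  obtain ⟨w₀, ws, ha, hb, hc⟩ := exists_poly_of_map_update_eq hab hac hbc
    (hf.map_update_eq a b) (hf.map_update_eq a c) (hf.map_update_eq b c)
  exact ⟨w₀, ws, by simp [ha, hb, hc]⟩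

end

/-- If `S` has at least 3 elements, `f : S* → S*` preserves all restricted congruences iff
it is of the form `x ↦ w₀ x w₁ x ⋯ x wₙ`. -/
theorem stmt_2 {S : Type*} (a b c : S) (hab : a ≠ b) (hac : a ≠ c) (hbc : b ≠ c)
    (f : List S → List S) : IsRCP f ↔ PolyForm f := by
  classical
  rw [polyForm_iff]
  constructor
  · intro hf
    obtain ⟨w₀, ws, habc⟩ := hf.exists_poly_singleton hab hac hbc
    exact ⟨w₀, ws, hf.ext (isRCP_poly w₀ ws) hab hac hbc habc⟩
  · rintro ⟨w₀, ws, rfl⟩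
    exact isRCP_poly w₀ ws
end

section
/- Assume Σ has at least 3 elements. A function f : Σ* → Σ* is congruence preserving if and only if it preserves all restricted congruences (i.e., f is CP if and only if f is RCP). -/
/-!
Kernels of endomorphisms are congruences, so CP implies RCP. Conversely, an RCP function `f`
is a polynomial `x ↦ w₀ x w₁ ⋯ x wₙ`, which visibly preserves every congruence. Applying RCP to
the merges `b ↦ a`, `c ↦ a`, `c ↦ b` shows that `f a`, `f b`, `f c` are the values at `a`, `b`,
`c` of one polynomial `P`. The identity `f y = P y` then spreads from these anchors to `ε`, to the
powers of `a`, to the words over `{a, b}` and finally to all words: if `φ x = φ y` for an anchor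
`y`, RCP gives `φ (f x) = φ (P x)`, and two words identified by endomorphisms separating every
pair of letters are equal.
-/

section

variable {S : Type*}

def wordPoly (n : ℕ) (w : ℕ → List S) (x : List S) : List S :=
  w 0 ++ ((List.range n).map fun i => x ++ w (i + 1)).flatten

@[simp]
theorem wordPoly_zero (w : ℕ → List S) (x : List S) : wordPoly 0 w x = w 0 := by
  simp [wordPoly]

theorem wordPoly_succ (n : ℕ) (w : ℕ → List S) (x : List S) :
    wordPoly (n + 1) w x = wordPoly n w x ++ (x ++ w (n + 1)) := by
  simp [wordPoly, List.range_succ]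

theorem wordPoly_update_zero_cons (n : ℕ) (w : ℕ → List S) (s : S) (x : List S) :
    wordPoly n (Function.update w 0 (s :: w 0)) x = s :: wordPoly n w x := by
  simp [wordPoly]

theorem wordPoly_shift (n : ℕ) (w : ℕ → List S) (x : List S) :
    wordPoly (n + 1) (fun | 0 => [] | i + 1 => w i) x = x ++ wordPoly n w x := by
  simp [wordPoly, List.range_succ_eq_map, Function.comp_def]

theorem flatMap_wordPoly (n : ℕ) (w : ℕ → List S) (x : List S) (g : S → List S) :
    (wordPoly n w x).flatMap g = wordPoly n (fun i => (w i).flatMap g) (x.flatMap g) := by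
  induction n with
  | zero => simp
  | succ n ih => simp [wordPoly_succ, List.flatMap_append, ih]

theorem IsCong.wordPoly {r : List S → List S → Prop} (hr : IsCong r) (n : ℕ) (w : ℕ → List S)
    {x y : List S} (hxy : r x y) : r (wordPoly n w x) (wordPoly n w y) := by
  induction n with
  | zero => exact hr.1.refl _
  | succ n ih =>
    simp only [wordPoly_succ]
    exact hr.2 _ _ _ _ ih (hr.2 _ _ _ _ hxy (hr.1.refl _))

theorem PolyForm.isCP {f : List S → List S} (hf : PolyForm f) : IsCP f := by
  obtain ⟨n, w, hfw⟩ := hf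
  intro r hr x y hxy
  rw [hfw, hfw]
  exact hr.wordPoly n w hxy

theorem IsHom.isCong_ker {φ : List S → List S} (hφ : IsHom φ) : IsCong fun x y => φ x = φ y :=
  ⟨⟨fun _ => rfl, Eq.symm, Eq.trans⟩, fun x y u v hxy huv => by
    dsimp only at hxy huv ⊢
    rw [hφ.2, hφ.2, hxy, huv]⟩

theorem IsCP.isRCP {f : List S → List S} (hf : IsCP f) : IsRCP f :=
  fun _ hφ => hf _ hφ.isCong_ker

theorem isHom_flatMap_s3 (g : S → List S) : IsHom fun x : List S => x.flatMap g :=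
  ⟨rfl, fun _ _ => List.flatMap_append⟩

def Separates (g : S → List S) (s t : S) : Prop :=
  ∃ p q, p ≠ q ∧ (g s).head? = some p ∧ (g t).head? = some q

theorem Separates.ne_nil_left {g : S → List S} {s t : S} (h : Separates g s t) : g s ≠ [] := by
  obtain ⟨p, _, _, hp, _⟩ := h
  rintro hs
  simp [hs] at hp

theorem Separates.symm {g : S → List S} {s t : S} (h : Separates g s t) : Separates g t s := by
  obtain ⟨p, q, hpq, hp, hq⟩ := h
  exact ⟨q, p, hpq.symm, hq, hp⟩

theorem separates_singleton {g : S → List S} {s t : S} (hst : s ≠ t) (hs : g s = [s])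
    (ht : g t = [t]) : Separates g s t :=
  ⟨s, t, hst, by simp [hs], by simp [ht]⟩

theorem separates_letters {σ : S → S} {s t : S} (h : σ s ≠ σ t) :
    Separates (fun r => [σ r]) s t :=
  ⟨σ s, σ t, h, rfl, rfl⟩

/-- At the first position where `F` and `Q` differ, an endomorphism separating the two letters
there would make the images differ. -/
theorem eq_of_forall_separates [Nontrivial S] {F Q : List S}
    (h : ∀ s t, s ≠ t → ∃ g : S → List S, Separates g s t ∧ F.flatMap g = Q.flatMap g) :
    F = Q := by
  induction F generalizing Q with
  | nil =>
    cases Q with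
    | nil => rfl
    | cons t v =>
      obtain ⟨s, hst⟩ := exists_ne t
      obtain ⟨g, hg, hFQ⟩ := h s t hst
      have : g t = [] := by simp_all
      exact absurd this hg.symm.ne_nil_left
  | cons s u ih =>
    cases Q with
    | nil =>
      obtain ⟨t, hts⟩ := exists_ne s
      obtain ⟨g, hg, hFQ⟩ := h s t hts.symm
      have : g s = [] := by simp_all
      exact absurd this hg.ne_nil_left
    | cons t v =>
      by_cases hst : s = t
      · subst hst
        congr 1
        refine ih fun s' t' hst' => ?_
        obtain ⟨g, hg, hFQ⟩ := h s' t' hst'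
        exact ⟨g, hg, by simpa using hFQ⟩
      · obtain ⟨g, ⟨p, q, hpq, hp, hq⟩, hFQ⟩ := h s t hst
        have := congrArg List.head? hFQ
        simp only [List.flatMap_cons, List.head?_append, hp, hq, Option.some_or] at this
        exact absurd (Option.some.inj this) hpq

theorem separates_update [DecidableEq S] {r s t p : S} {v : List S} (hv : v.head? = some p)
    (hst : s ≠ t) (hs : s = r → t ≠ p) (ht : t = r → s ≠ p) :
    Separates (Function.update (fun u => [u]) r v) s t := by
  by_cases hsr : s = r <;> by_cases htr : t = r
  · exact absurd (hsr.trans htr.symm) hst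
  · exact ⟨p, t, (hs hsr).symm, by simp [hsr, hv], by simp [htr]⟩
  · exact ⟨s, p, ht htr, by simp [hsr], by simp [htr, hv]⟩
  · exact separates_singleton hst (by simp [hsr]) (by simp [htr])

theorem flatMap_update_singleton_of_not_mem [DecidableEq S] {r : S} (v : List S) {x : List S}
    (hr : r ∉ x) : x.flatMap (Function.update (fun u => [u]) r v) = x := by
  induction x with
  | nil => rfl
  | cons s x ih =>
    simp only [List.mem_cons, not_or] at hr
    simp [Function.update_of_ne (Ne.symm hr.1), ih hr.2]

theorem eq_or_eq_of_update_eq_update [DecidableEq S] {a b c x y z : S} (hab : a ≠ b)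
    (hac : a ≠ c) (hbc : b ≠ c)
    (hxy : Function.update id b a x = Function.update id b a y)
    (hxz : Function.update id c a x = Function.update id c a z)
    (hyz : Function.update id c b y = Function.update id c b z) :
    (y = x ∧ z = x) ∨ (x = a ∧ y = b ∧ z = c) := by
  simp only [Function.update_apply, id] at hxy hxz hyz
  grind

/-- Positionwise, the three merges force the letters of `A`, `B`, `C` to be either all equal
or `a`, `b`, `c`. -/
theorem exists_wordPoly_of_map_update_eq [DecidableEq S] {a b c : S} (hab : a ≠ b)
    (hac : a ≠ c) (hbc : b ≠ c) (A : List S) {B C : List S}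
    (hAB : A.map (Function.update id b a) = B.map (Function.update id b a))
    (hAC : A.map (Function.update id c a) = C.map (Function.update id c a))
    (hBC : B.map (Function.update id c b) = C.map (Function.update id c b)) :
    ∃ n w, A = wordPoly n w [a] ∧ B = wordPoly n w [b] ∧ C = wordPoly n w [c] := by
  induction A generalizing B C with
  | nil =>
    obtain rfl : B = [] := List.map_eq_nil_iff.mp hAB.symm
    obtain rfl : C = [] := List.map_eq_nil_iff.mp hAC.symm
    exact ⟨0, fun _ => [], by simp⟩
  | cons x A ih =>
    obtain ⟨y, B, rfl⟩ := List.exists_cons_of_length_eq_add_one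
      (by simpa using congrArg List.length hAB.symm)
    obtain ⟨z, C, rfl⟩ := List.exists_cons_of_length_eq_add_one
      (by simpa using congrArg List.length hAC.symm)
    simp only [List.map_cons, List.cons.injEq] at hAB hAC hBC
    obtain ⟨n, w, hA, hB, hC⟩ := ih hAB.2 hAC.2 hBC.2
    rcases eq_or_eq_of_update_eq_update hab hac hbc hAB.1 hAC.1 hBC.1 with
      ⟨hyx, hzx⟩ | ⟨rfl, rfl, rfl⟩
    · exact ⟨n, Function.update w 0 (x :: w 0),
        by simp [wordPoly_update_zero_cons, hA, hB, hC, hyx, hzx]⟩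
    · exact ⟨n + 1, fun | 0 => [] | i + 1 => w i, by simp [wordPoly_shift, hA, hB, hC]⟩

namespace IsRCP

variable {f : List S → List S} {a b c : S} {n : ℕ} {w : ℕ → List S}

theorem map_eq_map (hf : IsRCP f) (σ : S → S) {x y : List S} (h : x.map σ = y.map σ) :
    (f x).map σ = (f y).map σ := by
  simp only [List.map_eq_flatMap] at h ⊢
  exact hf _ (isHom_flatMap_s3 _) x y h

theorem flatMap_eq_of_anchor (hf : IsRCP f) {y : List S}
    (hy : f y = wordPoly n w y) {g : S → List S} {x : List S}
    (hxy : x.flatMap g = y.flatMap g) : (f x).flatMap g = (wordPoly n w x).flatMap g := by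
  rw [hf _ (isHom_flatMap_s3 g) x y hxy, hy, flatMap_wordPoly, flatMap_wordPoly, hxy]

theorem eq_wordPoly_of_forall_separates [Nontrivial S] (hf : IsRCP f) {x : List S}
    (h : ∀ s t, s ≠ t → ∃ g y, Separates g s t ∧ x.flatMap g = y.flatMap g ∧
      f y = wordPoly n w y) :
    f x = wordPoly n w x :=
  eq_of_forall_separates fun s t hst => by
    obtain ⟨g, y, hg, hxy, hy⟩ := h s t hst
    exact ⟨g, hg, hf.flatMap_eq_of_anchor hy hxy⟩

theorem exists_wordPoly_singletons (hf : IsRCP f) (hab : a ≠ b) (hac : a ≠ c) (hbc : b ≠ c) :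
    ∃ n w, f [a] = wordPoly n w [a] ∧ f [b] = wordPoly n w [b] ∧ f [c] = wordPoly n w [c] := by
  classical
  refine exists_wordPoly_of_map_update_eq hab hac hbc _ ?_ ?_ ?_ <;>
    exact hf.map_eq_map _ (by simp [hab, hac, hbc])

theorem eq_wordPoly_nil (hf : IsRCP f) (hab : a ≠ b) (hac : a ≠ c) (hbc : b ≠ c)
    (ha : f [a] = wordPoly n w [a]) (hb : f [b] = wordPoly n w [b])
    (hc : f [c] = wordPoly n w [c]) : f [] = wordPoly n w [] := by
  classical
  have : Nontrivial S := ⟨a, b, hab⟩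
  refine hf.eq_wordPoly_of_forall_separates fun s t hst => ?_
  obtain ⟨r, hr, hrs, hrt⟩ : ∃ r, f [r] = wordPoly n w [r] ∧ r ≠ s ∧ r ≠ t := by
    by_cases has : a = s
    · by_cases hbt : b = t
      · exact ⟨c, hc, by grind, by grind⟩
      · exact ⟨b, hb, by grind, hbt⟩
    · by_cases hat : a = t
      · by_cases hbs : b = s
        · exact ⟨c, hc, by grind, by grind⟩
        · exact ⟨b, hb, hbs, by grind⟩
      · exact ⟨a, ha, has, hat⟩
  exact ⟨Function.update (fun u => [u]) r [], [r],
    separates_singleton hst (by simp [Ne.symm hrs]) (by simp [Ne.symm hrt]), by simp, hr⟩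

theorem eq_wordPoly_replicate (hf : IsRCP f) (hab : a ≠ b) (hac : a ≠ c) (hbc : b ≠ c)
    (h0 : f [] = wordPoly n w []) (hb : f [b] = wordPoly n w [b])
    (hc : f [c] = wordPoly n w [c]) (m : ℕ) :
    f (List.replicate m a) = wordPoly n w (List.replicate m a) := by
  classical
  have : Nontrivial S := ⟨a, b, hab⟩
  cases m with
  | zero => exact h0
  | succ m =>
    refine hf.eq_wordPoly_of_forall_separates fun s t hst => ?_
    -- substitute `a^(m+1)` for a letter `r ∈ {b, c}` unless that merges `s` with `t`
    obtain ⟨r, hr, hra, hsep⟩ : ∃ r, f [r] = wordPoly n w [r] ∧ r ≠ a ∧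
        (s = r → t ≠ a) ∧ (t = r → s ≠ a) := by
      by_cases h : (s = c ∧ t = a) ∨ (s = a ∧ t = c)
      · exact ⟨b, hb, hab.symm, by grind⟩
      · exact ⟨c, hc, hac.symm, by grind⟩
    refine ⟨Function.update (fun u => [u]) r (List.replicate (m + 1) a), [r],
      separates_update (p := a) (by rw [List.replicate_succ]; rfl) hst hsep.1 hsep.2, ?_, hr⟩
    rw [flatMap_update_singleton_of_not_mem _ (by simpa using hra)]
    simp

theorem eq_wordPoly_of_forall_mem_pair (hf : IsRCP f) (hab : a ≠ b) (hac : a ≠ c)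
    (hbc : b ≠ c) (hc : f [c] = wordPoly n w [c])
    (hpow : ∀ m, f (List.replicate m a) = wordPoly n w (List.replicate m a))
    {y : List S} (hy : ∀ r ∈ y, r = a ∨ r = b) : f y = wordPoly n w y := by
  classical
  have : Nontrivial S := ⟨a, b, hab⟩
  have hcy : c ∉ y := fun hmem => by grind
  refine hf.eq_wordPoly_of_forall_separates fun s t hst => ?_
  by_cases hst_ab : (s = a ∨ s = b) ∧ (t = a ∨ t = b)
  · refine ⟨Function.update (fun u => [u]) c y, [c],
      separates_singleton hst (by grind [Function.update_of_ne])
        (by grind [Function.update_of_ne]),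
      by simp [flatMap_update_singleton_of_not_mem _ hcy], hc⟩
  · -- collapse `y` onto `a^|y|` by a letter map that still tells `s` from `t`
    obtain ⟨u, hua, hub, hsep⟩ : ∃ u, u ≠ a ∧ u ≠ b ∧ (s = u ↔ t ≠ u) := by
      by_cases hs : s = a ∨ s = b
      · exact ⟨t, by grind, by grind, by grind⟩
      · exact ⟨s, by grind, by grind, by grind⟩
    refine ⟨fun r => [if r = u then b else a], List.replicate y.length a,
      separates_letters (by grind), ?_, hpow _⟩
    simp only [← List.map_eq_flatMap, List.map_replicate, if_neg (Ne.symm hua)]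
    exact List.map_eq_replicate_iff.mpr fun r hr => if_neg (by grind)

theorem eq_wordPoly (hf : IsRCP f) (hab : a ≠ b)
    (hpair : ∀ y : List S, (∀ r ∈ y, r = a ∨ r = b) → f y = wordPoly n w y)
    (x : List S) : f x = wordPoly n w x := by
  classical
  have : Nontrivial S := ⟨a, b, hab⟩
  refine hf.eq_wordPoly_of_forall_separates fun s t hst => ?_
  -- a retraction onto `{a, b}` telling `s` from `t`
  obtain ⟨u, hua, hsep⟩ : ∃ u, u ≠ a ∧ ((s = u ∨ s = b) ↔ ¬(t = u ∨ t = b)) := by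
    by_cases hb : s = b ∨ t = b
    · exact ⟨b, hab.symm, by grind⟩
    · by_cases hs : s = a
      · exact ⟨t, by grind, by grind⟩
      · exact ⟨s, hs, by grind⟩
  set σ : S → S := fun r => if r = u ∨ r = b then b else a
  refine ⟨fun r => [σ r], x.map σ, separates_letters (by grind), ?_,
    hpair _ fun r hr => by grind⟩
  simp only [← List.map_eq_flatMap, List.map_map]
  exact List.map_congr_left fun r _ => by grind

theorem polyForm (hf : IsRCP f) (hab : a ≠ b) (hac : a ≠ c) (hbc : b ≠ c) : PolyForm f := by
  obtain ⟨n, w, ha, hb, hc⟩ := hf.exists_wordPoly_singletons hab hac hbc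
  have h0 := hf.eq_wordPoly_nil hab hac hbc ha hb hc
  have hpow := hf.eq_wordPoly_replicate hab hac hbc h0 hb hc
  have hpair := fun y => hf.eq_wordPoly_of_forall_mem_pair hab hac hbc hc hpow (y := y)
  exact ⟨n, w, hf.eq_wordPoly hab hpair⟩

end IsRCP

end

/-- If `S` has at least 3 elements, `f : S* → S*` is congruence preserving iff it preserves
all restricted congruences. -/
theorem stmt_3 {S : Type*} (a b c : S) (hab : a ≠ b) (hac : a ≠ c) (hbc : b ≠ c)
    (f : List S → List S) : IsCP f ↔ IsRCP f :=
  ⟨IsCP.isRCP, fun hf => (hf.polyForm hab hac hbc).isCP⟩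
end

section
/- If f : Σ* → Σ* is RCP and a, b ∈ Σ with b ≠ a, then for all n ∈ ℕ, |f(aⁿ)|_b = |f(ε)|_b, where aⁿ is the word consisting of n copies of a and ε is the empty word. -/
/-! The endomorphism of the free monoid erasing the letter `a` identifies `aⁿ` with `ε`, so by
RCP it identifies `f (aⁿ)` with `f ε`; and it does not change the number of `b`'s. -/

theorem isHom_filter {S : Type*} (p : S → Bool) : IsHom (List.filter p) :=
  ⟨rfl, fun x y => List.filter_append x y⟩

theorem IsRCP.filter_eq_filter {S : Type*} {f : List S → List S} (hf : IsRCP f)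
    (p : S → Bool) {x y : List S} (h : x.filter p = y.filter p) :
    (f x).filter p = (f y).filter p :=
  hf _ (isHom_filter p) x y h

theorem IsRCP.count_eq_count_of_filter_ne_eq {S : Type*} [DecidableEq S] {f : List S → List S}
    (hf : IsRCP f) {a b : S} (hba : b ≠ a) {x y : List S}
    (h : x.filter (· ≠ a) = y.filter (· ≠ a)) : (f x).count b = (f y).count b := by
  have hb : (fun c => decide (c ≠ a)) b = true := decide_eq_true hba
  calc (f x).count b = ((f x).filter (· ≠ a)).count b := (List.count_filter (a := b) hb).symm
    _ = ((f y).filter (· ≠ a)).count b := by rw [hf.filter_eq_filter _ h]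
    _ = (f y).count b := List.count_filter (a := b) hb

/-- If `f` is RCP and `b ≠ a` then `|f (aⁿ)|_b = |f ε|_b` for all `n`. -/
theorem stmt_6 {S : Type*} [DecidableEq S] (f : List S → List S) (hf : IsRCP f)
    (a b : S) (hba : b ≠ a) (n : ℕ) :
    (f (List.replicate n a)).count b = (f []).count b :=
  hf.count_eq_count_of_filter_ne_eq hba (by simp)
end

section
/- Assume Σ contains at least two letters and f : Σ* → Σ* is RCP. Fix a ∈ Σ and let p_f = |f(a)| − |f(ε)| (which is independent of the choice of a ∈ Σ). Then for every word x ∈ Σ* and every letter c ∈ Σ: |f(x)| = p_f·|x| + |f(ε)| and |f(x)|_c = p_f·|x|_c + |f(ε)|_c. -/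
/-!
Mapping every word to `t ^ (number of letters satisfying p)` is an endomorphism of the free
monoid, so for an RCP function `f` the number of letters of `f x` satisfying `p` depends only on
the number of letters of `x` satisfying `p`. Applying this to `p` and to `p ∨ (· = b)` with
`p b = false`, and comparing `u ++ [b]` with a word `u'` having one more `p`-letter, shows that
every extra `p`-letter adds the same amount `|f b|_b - |f ε|_b` to the `p`-count of the image.
Taking `p = (· ≠ b)` identifies this gain with `|f d| - |f ε|` for any `d ≠ b`, hence with `p_f`.
-/

open List

theorem List.countP_or_beq {S : Type*} [DecidableEq S] {p : S → Bool} {b : S}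
    (hb : p b = false) (l : List S) :
    l.countP (fun s => p s || s == b) = l.countP p + l.count b := by
  induction l with
  | nil => rfl
  | cons s l ih =>
    rw [countP_cons, countP_cons, count_cons, ih]
    by_cases hs : s = b <;> simp [hs, hb] <;> omega

def countGain {S : Type*} [DecidableEq S] (f : List S → List S) (b : S) : ℤ :=
  ((f [b]).count b : ℤ) - (f []).count b

namespace IsRCP

variable {S : Type*} {f : List S → List S}

theorem countP_eq [Nonempty S] (hf : IsRCP f) (p : S → Bool) {x y : List S}
    (h : x.countP p = y.countP p) :
    (f x).countP p = (f y).countP p := by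
  let t : S := Classical.arbitrary S
  have hφ : IsHom fun z : List S => replicate (z.countP p) t :=
    ⟨rfl, fun u v => by simp only [countP_append, replicate_add]⟩
  simpa using congrArg length (hf _ hφ x y (by simp only [h]))

theorem length_eq [Nonempty S] (hf : IsRCP f) {x y : List S} (h : x.length = y.length) :
    (f x).length = (f y).length := by
  simpa using hf.countP_eq (fun _ => true) (by simpa using h)

variable [DecidableEq S]

theorem count_eq (hf : IsRCP f) (c : S) {x y : List S} (h : x.count c = y.count c) :
    (f x).count c = (f y).count c :=
  have : Nonempty S := ⟨c⟩
  hf.countP_eq _ h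

theorem countP_add_count_of_countP_succ (hf : IsRCP f) {p : S → Bool} {b : S} (hb : p b = false)
    {u u' : List S} (hu : b ∉ u) (hu' : b ∉ u') (h : u'.countP p = u.countP p + 1) :
    (f u').countP p + (f []).count b = (f u).countP p + (f [b]).count b := by
  have : Nonempty S := ⟨b⟩
  have key := hf.countP_eq (fun s => p s || s == b) (x := u ++ [b]) (y := u')
    (by simp [countP_or_beq hb, count_eq_zero_of_not_mem hu, count_eq_zero_of_not_mem hu', h, hb])
  rw [countP_or_beq hb, countP_or_beq hb] at key
  have hpu : (f (u ++ [b])).countP p = (f u).countP p := hf.countP_eq p (by simp [hb])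
  have hbu : (f (u ++ [b])).count b = (f [b]).count b :=
    hf.count_eq b (by simp [count_eq_zero_of_not_mem hu])
  have hbu' : (f u').count b = (f []).count b :=
    hf.count_eq b (by simp [count_eq_zero_of_not_mem hu'])
  omega

theorem countP_apply_replicate (hf : IsRCP f) {p : S → Bool} {b d : S} (hb : p b = false)
    (hd : p d = true) (n : ℕ) :
    ((f (replicate n d)).countP p : ℤ) = (f []).countP p + n * countGain f b := by
  have hdb : d ≠ b := fun h => by simp [h, hb] at hd
  have hnot : ∀ m, b ∉ replicate m d := fun m hm => hdb (eq_of_mem_replicate hm).symm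
  induction n with
  | zero => simp
  | succ n ih =>
    have step := hf.countP_add_count_of_countP_succ hb (hnot n) (hnot (n + 1))
      (by simp [countP_replicate, hd])
    unfold countGain at *
    push_cast
    linarith

theorem length_apply_replicate_of_ne (hf : IsRCP f) {b d : S} (hdb : d ≠ b) (n : ℕ) :
    ((f (replicate n d)).length : ℤ) = (f []).length + n * countGain f b := by
  have : Nonempty S := ⟨b⟩
  have hlen : ∀ z : List S, z.length = z.countP (· != b) + z.count b := fun z => by
    rw [← countP_or_beq (p := fun s => s != b) (by simp), ← countP_true]
    exact countP_congr fun s _ => by by_cases s = b <;> simp [*]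
  have hp := hf.countP_apply_replicate (p := fun s => s != b) (b := b) (d := d) (by simp)
    (by simpa using hdb) n
  have hcount : (f (replicate n d)).count b = (f []).count b :=
    hf.count_eq b (by simp [count_replicate, hdb])
  rw [hlen, hlen (f []), hcount]
  push_cast
  linarith

theorem countGain_eq [Nontrivial S] (hf : IsRCP f) (a b : S) :
    countGain f b = ((f [a]).length : ℤ) - (f []).length := by
  obtain ⟨d, hdb⟩ := exists_ne b
  have h := hf.length_apply_replicate_of_ne hdb 1
  rw [hf.length_eq (x := [a]) (y := replicate 1 d) rfl, h]
  ring

end IsRCP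

/-- If `S` has at least two letters and `f` is RCP, then with `p_f = |f a| - |f ε|`
(independent of the letter `a`), one has `|f x| = p_f·|x| + |f ε|` and
`|f x|_c = p_f·|x|_c + |f ε|_c` for every word `x` and letter `c`. -/
theorem stmt_7 {S : Type*} [DecidableEq S] (hS : ∃ a b : S, a ≠ b)
    (f : List S → List S) (hf : IsRCP f) (a : S) (x : List S) (c : S) :
    ((f x).length : ℤ) =
      (((f [a]).length : ℤ) - ((f []).length : ℤ)) * (x.length : ℤ) + ((f []).length : ℤ) ∧
    ((f x).count c : ℤ) =
      (((f [a]).length : ℤ) - ((f []).length : ℤ)) * (x.count c : ℤ) + ((f []).count c : ℤ) := by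
  obtain ⟨a₀, b₀, hab⟩ := hS
  have : Nontrivial S := ⟨⟨a₀, b₀, hab⟩⟩
  constructor
  · obtain ⟨d, hda⟩ := exists_ne a
    rw [hf.length_eq (length_replicate (n := x.length) (a := d)).symm,
      hf.length_apply_replicate_of_ne hda, hf.countGain_eq a a]
    ring
  · obtain ⟨b, hbc⟩ := exists_ne c
    have h : ((f (replicate (x.count c) c)).count c : ℤ) =
        (f []).count c + x.count c * countGain f b :=
      hf.countP_apply_replicate (by simpa using hbc) (by simp) _
    rw [hf.count_eq c count_replicate_self.symm, h, hf.countGain_eq a b]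
    ring
end

section
/- Assume Σ has at least 3 elements and f : Σ* → Σ* is RCP. If there exist letters a, b ∈ Σ with a ≠ b such that f(a) ∈ bΣ* (i.e., the word f(a) starts with the letter b), then f(x) ∈ bΣ* for every word x ∈ Σ*. -/
/-!
Substituting a word `v` for a letter `e` is an endomorphism of the free monoid, and it does not
change the first letter of a word unless that letter is `e`. So if `f [e]` starts with `b ≠ e`,
then the RCP property applied to `e ↦ x` (for `e ∉ x`) or to the erasure of `e` (when `f` of the
erased word starts with `b`) shows that `f x` starts with `b` or `e`. Doing this for two letters
`a ≠ c` different from `b` pins the first letter of `f x` down to `b`, by induction on `|x|`;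
such a `c` exists since `|Σ| ≥ 3`, and `f [c]` starts with `b` by applying RCP to `c ↦ a`.
-/

theorem exists_ne_ne_of_three_distinct {α : Type*} {c₁ c₂ c₃ : α} (h12 : c₁ ≠ c₂)
    (h13 : c₁ ≠ c₃) (h23 : c₂ ≠ c₃) (a b : α) : ∃ c, c ≠ a ∧ c ≠ b := by
  by_contra! h
  rcases eq_or_ne c₁ a with rfl | h₁
  · exact h23 ((h c₂ h12.symm).trans (h c₃ h13.symm).symm)
  · have hc₁ := h c₁ h₁
    have hc₂ : c₂ = a := by_contra fun h₂ => h12 (hc₁.trans (h c₂ h₂).symm)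
    have hc₃ : c₃ = a := by_contra fun h₃ => h13 (hc₁.trans (h c₃ h₃).symm)
    exact h23 (hc₂.trans hc₃.symm)

theorem eq_of_eq_or_of_eq_or {α : Type*} {x p q r : α} (hq : x = p ∨ x = q)
    (hr : x = p ∨ x = r) (hqr : q ≠ r) : x = p := by
  grind

namespace List

variable {S : Type*} [DecidableEq S]

def subst (e : S) (v : List S) : List S → List S :=
  flatMap fun t => if t = e then v else [t]

@[simp]
theorem subst_nil (e : S) (v : List S) : subst e v [] = [] := rfl

@[simp]
theorem subst_cons (e : S) (v : List S) (t : S) (l : List S) :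
    subst e v (t :: l) = (if t = e then v else [t]) ++ subst e v l := by
  simp [subst]

theorem isHom_subst (e : S) (v : List S) : IsHom (subst e v) :=
  ⟨rfl, fun x y => by simp [subst]⟩

theorem subst_singleton_self (e : S) (v : List S) : subst e v [e] = v := by
  simp

theorem subst_eq_self {e : S} (v : List S) {l : List S} (h : e ∉ l) : subst e v l = l := by
  induction l with
  | nil => rfl
  | cons t l ih =>
    simp only [mem_cons, not_or] at h
    simp [Ne.symm h.1, ih h.2]

theorem subst_nil_eq_filter (e : S) (l : List S) : subst e [] l = l.filter (· ≠ e) := by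
  induction l with
  | nil => rfl
  | cons t l ih => by_cases ht : t = e <;> simp [ht, ih]

theorem head?_eq_or_of_head?_subst {e b : S} {v l : List S} (hbe : b ≠ e)
    (h : (subst e v l).head? = some b) : l.head? = some b ∨ l.head? = some e := by
  match l with
  | [] => simp at h
  | t :: l =>
    by_cases ht : t = e
    · simp [ht]
    · simp_all

end List

section

open List

variable {S : Type*} [DecidableEq S] {f : List S → List S}

theorem IsRCP.head?_eq_or_of_subst_eq (hf : IsRCP f) {e b : S} (hbe : b ≠ e) {v x y : List S}
    (hxy : subst e v x = subst e v y) (hy : (f y).head? = some b) :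
    (f x).head? = some b ∨ (f x).head? = some e := by
  obtain ⟨u, hu⟩ := List.head?_eq_some_iff.1 hy
  refine head?_eq_or_of_head?_subst (v := v) hbe ?_
  rw [hf _ (isHom_subst e v) x y hxy, hu]
  simp [hbe]

theorem IsRCP.head?_eq_or_of_not_mem (hf : IsRCP f) {e b : S} (hbe : b ≠ e)
    (he : (f [e]).head? = some b) {x : List S} (hx : e ∉ x) :
    (f x).head? = some b ∨ (f x).head? = some e :=
  hf.head?_eq_or_of_subst_eq hbe (by rw [subst_eq_self x hx, subst_singleton_self]) he

theorem IsRCP.head?_eq_or_of_filter (hf : IsRCP f) {e b : S} (hbe : b ≠ e) {x : List S}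
    (h : (f (x.filter (· ≠ e))).head? = some b) :
    (f x).head? = some b ∨ (f x).head? = some e :=
  hf.head?_eq_or_of_subst_eq (v := []) hbe (by simp [subst_nil_eq_filter]) h

theorem IsRCP.head?_singleton_eq (hf : IsRCP f) {a b c : S} (hab : a ≠ b) (hcb : c ≠ b)
    (ha : (f [a]).head? = some b) : (f [c]).head? = some b := by
  by_cases hca : c = a
  · rwa [hca]
  have hc_or_a := hf.head?_eq_or_of_not_mem hab.symm ha (x := [c]) (by simpa using Ne.symm hca)
  have hc_or_c := hf.head?_eq_or_of_subst_eq (v := [a]) hcb.symm (x := [c]) (y := [a])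
    (by simp [Ne.symm hca]) ha
  exact eq_of_eq_or_of_eq_or hc_or_a hc_or_c (by simpa using Ne.symm hca)

theorem IsRCP.head?_eq_of_two_letters (hf : IsRCP f) {a b c : S} (hac : a ≠ c) (hab : a ≠ b)
    (hcb : c ≠ b) (ha : (f [a]).head? = some b) (hc : (f [c]).head? = some b)
    (x : List S) : (f x).head? = some b := by
  have h_or : ∀ e, e ≠ b → (f [e]).head? = some b →
      (f x).head? = some b ∨ (f x).head? = some e := by
    intro e heb he
    by_cases hex : e ∈ x
    · have : (x.filter (· ≠ e)).length < x.length :=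
        length_filter_lt_length_iff_exists.2 ⟨e, hex, by simp⟩
      exact hf.head?_eq_or_of_filter heb.symm
        (hf.head?_eq_of_two_letters hac hab hcb ha hc _)
    · exact hf.head?_eq_or_of_not_mem heb.symm he hex
  exact eq_of_eq_or_of_eq_or (h_or a hab ha) (h_or c hcb hc) (by simpa using hac)
termination_by x.length

end

/-- If `S` has at least 3 elements, `f` is RCP, and `f a` starts with the letter `b ≠ a`
for some letter `a`, then `f x` starts with `b` for every word `x`. -/
theorem stmt_9 {S : Type*} (c₁ c₂ c₃ : S) (h12 : c₁ ≠ c₂) (h13 : c₁ ≠ c₃) (h23 : c₂ ≠ c₃)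
    (f : List S → List S) (hf : IsRCP f) (a b : S) (hab : a ≠ b)
    (h : ∃ w : List S, f [a] = b :: w) :
    ∀ x : List S, ∃ w : List S, f x = b :: w := by
  classical
  obtain ⟨c, hca, hcb⟩ := exists_ne_ne_of_three_distinct h12 h13 h23 a b
  have ha : (f [a]).head? = some b := List.head?_eq_some_iff.2 h
  have hc := hf.head?_singleton_eq hab hcb ha
  intro x
  exact List.head?_eq_some_iff.1 (hf.head?_eq_of_two_letters hca.symm hab hcb ha hc x)
end

section
/- Assume Σ has at least 3 elements and f : Σ* → Σ* is RCP. If f(a) ∈ aΣ* for every letter a ∈ Σ (i.e., a is a prefix of f(a)), then f(x) ∈ xΣ* for every word x ∈ Σ* (i.e., x is a prefix of f(x)). -/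
open List

section

variable {S : Type*}

lemma exists_pair_ne_of_three {c₁ c₂ c₃ : S} (h12 : c₁ ≠ c₂) (h13 : c₁ ≠ c₃) (h23 : c₂ ≠ c₃)
    (d : S) : ∃ b c : S, d ≠ b ∧ d ≠ c ∧ b ≠ c := by
  by_cases e1 : d = c₁
  · exact ⟨c₂, c₃, e1 ▸ h12, e1 ▸ h13, h23⟩
  by_cases e2 : d = c₂
  · exact ⟨c₁, c₃, e1, e2 ▸ h23, h13⟩
  · exact ⟨c₁, c₂, e1, e2, h12⟩

namespace IsRCP

variable {f : List S → List S}

lemma flatMap_congr (hf : IsRCP f) (σ : S → List S) {x y : List S}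
    (h : x.flatMap σ = y.flatMap σ) : (f x).flatMap σ = (f y).flatMap σ :=
  hf _ ⟨rfl, fun _ _ => flatMap_append⟩ x y h

lemma map_apply_map_of_idem (hf : IsRCP f) {g : S → S} (hg : ∀ s, g (g s) = g s) (x : List S) :
    (f (x.map g)).map g = (f x).map g :=
  hf _ ⟨rfl, fun _ _ => map_append⟩ _ _ (by simp [hg])

end IsRCP

variable [DecidableEq S]

def collapse (d b : S) (s : S) : S := if s = d then d else b

lemma collapse_collapse (d b s : S) : collapse d b (collapse d b s) = collapse d b s := by
  unfold collapse; split_ifs <;> simp_all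

lemma collapse_eq_self_iff {d b s : S} (hbd : b ≠ d) : collapse d b s = d ↔ s = d := by
  unfold collapse; split_ifs <;> simp_all

lemma map_collapse_of_notMem {d b : S} {x : List S} (h : d ∉ x) :
    x.map (collapse d b) = replicate x.length b :=
  map_eq_replicate_iff.mpr fun _ hs => if_neg (ne_of_mem_of_not_mem hs h)

lemma notMem_map_collapse {d b c : S} (hcd : c ≠ d) (hcb : c ≠ b) (x : List S) :
    c ∉ x.map (collapse d b) := by
  simp only [mem_map, collapse, not_exists, not_and]
  intro s _
  split_ifs
  exacts [hcd.symm, hcb.symm]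

lemma prefix_of_forall_map_collapse {x v : List S}
    (h : ∀ d ∈ x, ∃ b ≠ d, x.map (collapse d b) <+: v.map (collapse d b)) : x <+: v := by
  refine prefix_iff_getElem?.mpr fun k hk => ?_
  obtain ⟨b, hbd, hpre⟩ := h x[k] (getElem_mem hk)
  have hk' := prefix_iff_getElem?.mp hpre k (by simpa using hk)
  simp only [getElem?_map, getElem_map, collapse, Option.map_eq_some_iff] at hk'
  obtain ⟨s, hs, hsd⟩ := hk'
  rwa [← (collapse_eq_self_iff hbd).mp hsd]

def letterSubst (a : S) (y : List S) (s : S) : List S := if s = a then y else [s]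

lemma flatMap_letterSubst_of_notMem {a : S} {y l : List S} (h : a ∉ l) :
    l.flatMap (letterSubst a y) = l := by
  conv_rhs => rw [← l.flatMap_singleton']
  exact flatMap_congr fun _ hs => if_neg (ne_of_mem_of_not_mem hs h)

lemma prefix_of_prefix_flatMap_letterSubst {a : S} {y p v : List S}
    (hp : p <+: v.flatMap (letterSubst a y)) (ha : a ∉ v.take p.length) : p <+: v := by
  have hsplit : v.flatMap (letterSubst a y) =
      v.take p.length ++ (v.drop p.length).flatMap (letterSubst a y) := by
    conv_lhs => rw [← v.take_append_drop p.length]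
    rw [flatMap_append, flatMap_letterSubst_of_notMem ha]
  by_cases hv : p.length ≤ v.length
  · have hpt : p <+: v.take p.length :=
      prefix_of_prefix_length_le hp (hsplit ▸ prefix_append _ _) (by simp [hv])
    exact hpt.trans (take_prefix _ _)
  · rw [hsplit, take_of_length_le (by omega), drop_of_length_le (by omega)] at hp
    simpa using hp

namespace IsRCP

variable {f : List S → List S}

lemma prefix_flatMap_letterSubst (hf : IsRCP f) {a : S} (ha : [a] <+: f [a]) {y : List S}
    (hy : a ∉ y) : y <+: (f y).flatMap (letterSubst a y) := by
  obtain ⟨w, hw⟩ := ha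
  have hcongr := hf.flatMap_congr (letterSubst a y) (x := [a]) (y := y)
    (by simp [flatMap_letterSubst_of_notMem hy, letterSubst])
  rw [← hcongr, ← hw, flatMap_append]
  simp [letterSubst]

lemma prefix_of_notMem_take (hf : IsRCP f) {a : S} (ha : [a] <+: f [a]) {y : List S}
    (hy : a ∉ y) (h : a ∉ (f y).take y.length) : y <+: f y :=
  prefix_of_prefix_flatMap_letterSubst (hf.prefix_flatMap_letterSubst ha hy) h

lemma replicate_prefix (hf : IsRCP f) {a b c : S} (hab : a ≠ b) (hcb : c ≠ b) (hac : a ≠ c)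
    (ha : [a] <+: f [a]) (hc : [c] <+: f [c]) (n : ℕ) :
    replicate n b <+: f (replicate n b) := by
  set v := f (replicate n b)
  have hsubst : ∀ d, d ≠ b → [d] <+: f [d] → ∀ k ≤ n, d ∉ v.take k → replicate k b <+: v := by
    intro d hdb hd k hk hdv
    have hn := hf.prefix_flatMap_letterSubst hd (y := replicate n b) (by simp [hdb])
    have hkn : replicate k b <+: replicate n b := prefix_replicate_iff.mpr ⟨by simpa, by simp⟩
    exact prefix_of_prefix_flatMap_letterSubst (hkn.trans hn) (by simpa using hdv)
  suffices ∀ k ≤ n, replicate k b <+: v from this n le_rfl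
  intro k hk
  induction k with
  | zero => exact nil_prefix
  | succ k ih =>
    have hvk : v.take k = replicate k b := by
      simpa using (prefix_iff_eq_take.mp (ih (by omega))).symm
    -- the first `k` letters are `b`, so `a` and `c` cannot both occur among the first `k + 1`
    by_cases hav : a ∈ v.take (k + 1)
    · refine hsubst c hcb hc _ hk fun hcv => hac ?_
      simp only [take_add_one, hvk, mem_append, mem_replicate, Option.mem_toList]
        at hav hcv
      grind
    · exact hsubst a hab ha _ hk hav

lemma prefix_of_notMem (hf : IsRCP f) {a b c : S} (hab : a ≠ b) (hcb : c ≠ b) (hac : a ≠ c)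
    (ha : [a] <+: f [a]) (hc : [c] <+: f [c]) {y : List S} (hy : c ∉ y) : y <+: f y := by
  have hpre : replicate y.length b <+: ((f y).map (collapse c b)) := by
    rw [← hf.map_apply_map_of_idem (collapse_collapse c b), map_collapse_of_notMem hy]
    simpa [collapse, hcb.symm] using
      (hf.replicate_prefix hab hcb hac ha hc y.length).map (collapse c b)
  refine hf.prefix_of_notMem_take hc hy fun hcy => hcb ?_
  have htake : ((f y).map (collapse c b)).take y.length = replicate y.length b := by
    simpa using (prefix_iff_eq_take.mp hpre).symm
  have hcy' := mem_map_of_mem (f := collapse c b) hcy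
  rw [map_take, htake] at hcy'
  simpa [collapse] using eq_of_mem_replicate hcy'

end IsRCP

end

/-- If `S` has at least 3 elements, `f` is RCP, and `a` is a prefix of `f a` for every
letter `a`, then `x` is a prefix of `f x` for every word `x`. -/
theorem stmt_10 {S : Type*} (c₁ c₂ c₃ : S) (h12 : c₁ ≠ c₂) (h13 : c₁ ≠ c₃) (h23 : c₂ ≠ c₃)
    (f : List S → List S) (hf : IsRCP f)
    (h : ∀ a : S, ∃ w : List S, f [a] = a :: w) :
    ∀ x : List S, ∃ w : List S, f x = x ++ w := by
  classical
  have hpre : ∀ a : S, [a] <+: f [a] := fun a => (h a).imp fun _ hw => hw.symm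
  refine fun x => (prefix_of_forall_map_collapse fun d _ => ?_).imp fun _ hw => hw.symm
  obtain ⟨b, c, hdb, hdc, hbc⟩ := exists_pair_ne_of_three h12 h13 h23 d
  refine ⟨b, hdb.symm, ?_⟩
  simpa [map_map, Function.comp_def, collapse_collapse, hf.map_apply_map_of_idem] using
    (hf.prefix_of_notMem hdb hbc.symm hdc (hpre d) (hpre c)
      (notMem_map_collapse hdc.symm hbc.symm x)).map (collapse d b)
end

section
/- Assume Σ has at least 3 elements, f : Σ* → Σ* is RCP, and g : Σ* → Σ* is a function such that either there is a fixed letter a ∈ Σ with f(x) = a·g(x) for all x ∈ Σ*, or f(x) = x·g(x) for all x ∈ Σ*. Then g is RCP. -/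
section

variable {S : Type*}

theorem IsHom.append_cancel_left {φ : List S → List S} (hφ : IsHom φ) {u u' v v' : List S}
    (hu : φ u = φ u') (h : φ (u ++ v) = φ (u' ++ v')) : φ v = φ v' := by
  rw [hφ.2, hφ.2, hu] at h
  exact List.append_cancel_left h

theorem isRCP_id : IsRCP (id : List S → List S) :=
  fun _ _ _ _ hxy => hxy

theorem isRCP_const (w : List S) : IsRCP (fun _ : List S => w) :=
  fun _ _ _ _ _ => rfl

theorem IsRCP.of_append_left {f p g : List S → List S} (hf : IsRCP f) (hp : IsRCP p)
    (hfpg : ∀ x, f x = p x ++ g x) : IsRCP g := by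
  intro φ hφ x y hxy
  have hfxy := hf φ hφ x y hxy
  rw [hfpg x, hfpg y] at hfxy
  exact hφ.append_cancel_left (hp φ hφ x y hxy) hfxy

end

theorem stmt_12_general {S : Type*}
    (f g : List S → List S) (hf : IsRCP f)
    (h : (∃ a : S, ∀ x : List S, f x = a :: g x) ∨ (∀ x : List S, f x = x ++ g x)) :
    IsRCP g := by
  rcases h with ⟨a, ha⟩ | hx
  · exact hf.of_append_left (isRCP_const [a]) ha
  · exact hf.of_append_left isRCP_id hx

/-- If `S` has at least 3 elements, `f` is RCP, and either `f x = a · g x` for a fixed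
letter `a` and all `x`, or `f x = x · g x` for all `x`, then `g` is RCP. -/
theorem stmt_12 {S : Type*} (c₁ c₂ c₃ : S) (h12 : c₁ ≠ c₂) (h13 : c₁ ≠ c₃) (h23 : c₂ ≠ c₃)
    (f g : List S → List S) (hf : IsRCP f)
    (h : (∃ a : S, ∀ x : List S, f x = a :: g x) ∨ (∀ x : List S, f x = x ++ g x)) :
    IsRCP g :=
  stmt_12_general f g hf h
end

section
/- Assume Σ contains at least two letters and f : (Σ*)ᵏ → Σ* is RCP. Then there exist natural numbers p_{f,1}, …, p_{f,k}, e_f such that for all x₁, …, x_k ∈ Σ*: |f(x₁, …, x_k)| = p_{f,1}|x₁| + ⋯ + p_{f,k}|x_k| + e_f, and for every letter a ∈ Σ: |f(x₁, …, x_k)|_a = p_{f,1}|x₁|_a + ⋯ + p_{f,k}|x_k|_a + |f(ε, …, ε)|_a; moreover e_f = |f(ε, …, ε)| and, for any letter a ∈ Σ, p_{f,i} = |f(ε, …, ε, a, ε, …, ε)| − |f(ε, …, ε)| where a is in the i-th position. -/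
/-- A `k`-ary function is congruence preserving. -/
def IsCPK {S : Type*} (k : ℕ) (f : (Fin k → List S) → List S) : Prop :=
  ∀ r : List S → List S → Prop, IsCong r → ∀ x y : Fin k → List S,
    (∀ i, r (x i) (y i)) → r (f x) (f y)

/-- A `k`-ary function preserves all restricted congruences
(kernels of endomorphisms of the free monoid). -/
def IsRCPK {S : Type*} (k : ℕ) (f : (Fin k → List S) → List S) : Prop :=
  ∀ φ : List S → List S, IsHom φ → ∀ x y : Fin k → List S,
    (∀ i, φ (x i) = φ (y i)) → φ (f x) = φ (f y)

/-- `f (x₁, …, x_k) = w₀ x_{i₁}^{p₁} w₁ x_{i₂}^{p₂} w₂ ⋯ x_{iₙ}^{pₙ} wₙ`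
for fixed words `w₀, …, wₙ`, indices `i₁, …, iₙ` and exponents `p₁, …, pₙ`. -/
def PolyFormK {S : Type*} (k : ℕ) (f : (Fin k → List S) → List S) : Prop :=
  ∃ (n : ℕ) (w : ℕ → List S) (idx : ℕ → Fin k) (p : ℕ → ℕ), ∀ x : Fin k → List S,
    f x = w 0 ++ List.flatten ((List.range n).map fun j =>
      List.flatten (List.replicate (p (j + 1)) (x (idx (j + 1)))) ++ w (j + 1))

theorem exists_eq_sum_mul_add_of_map_add_add {ι : Type*} [Fintype ι] [DecidableEq ι]
    (L : (ι → ℕ) → ℕ) (hL : ∀ n m, L (n + m) + L 0 = L n + L m) :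
    ∃ p : ι → ℕ, ∀ n, L n = ∑ i, p i * n i + L 0 := by
  let g : (ι → ℕ) →+ ℤ :=
    { toFun := fun n => L n - L 0
      map_zero' := sub_self _
      map_add' := fun n m => by have := hL n m; omega }
  let e : ι → ι → ℕ := fun i j => if i = j then 1 else 0
  -- `L` takes values in `ℕ`, so `g` cannot decrease along a coordinate axis
  have hg_nonneg (i : ι) : 0 ≤ g (e i) := by
    by_contra! hneg
    have h : (L ((L 0 + 1) • e i) : ℤ) - L 0 = ((L 0 + 1 : ℕ) : ℤ) * g (e i) :=
      (map_nsmul g _ _).trans (nsmul_eq_mul _ _)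
    push_cast at h
    nlinarith [Int.natCast_nonneg (L ((L 0 + 1) • e i))]
  refine ⟨fun i => (g (e i)).toNat, fun n => ?_⟩
  have h := LinearMap.pi_apply_eq_sum_univ g.toNatLinearMap n
  simp only [AddMonoidHom.coe_toNatLinearMap, nsmul_eq_mul] at h
  have : (L n : ℤ) = ∑ i, ((g (e i)).toNat * n i : ℕ) + L 0 := by
    push_cast
    simp only [Int.toNat_of_nonneg (hg_nonneg _), mul_comm]
    rw [← h]
    simp [g]
  exact_mod_cast this

theorem List.length_eq_count_add_countP_ne {S : Type*} [DecidableEq S] (u : List S) (a : S) :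
    u.length = u.count a + u.countP (· ≠ a) := by
  simpa [List.count, beq_iff_eq] using List.length_eq_countP_add_countP (· == a) (l := u)

theorem isHom_flatMap_s14 {S : Type*} (σ : S → List S) : IsHom fun u : List S => u.flatMap σ :=
  ⟨rfl, fun _ _ => List.flatMap_append⟩

theorem List.flatMap_ite_singleton {S : Type*} (q : S → Bool) (a : S) (u : List S) :
    u.flatMap (fun c => if q c then [a] else []) = List.replicate (u.countP q) a := by
  induction u with
  | nil => rfl
  | cons c u ih => cases hc : q c <;> simp [hc, ih, List.replicate_succ]

namespace IsRCPK

variable {S : Type*} {k : ℕ} {f : (Fin k → List S) → List S}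

theorem countP_eq (hf : IsRCPK k f) (a : S) (q : S → Bool) {x y : Fin k → List S}
    (h : ∀ i, (x i).countP q = (y i).countP q) : (f x).countP q = (f y).countP q := by
  have := hf _ (isHom_flatMap_s14 fun c => if q c then [a] else []) x y fun i => by
    simp only [List.flatMap_ite_singleton, h i]
  simpa only [List.flatMap_ite_singleton, List.length_replicate] using congrArg List.length this

theorem length_eq (hf : IsRCPK k f) (a : S) {x y : Fin k → List S}
    (h : ∀ i, (x i).length = (y i).length) : (f x).length = (f y).length := by
  simpa only [List.countP_true] using
    hf.countP_eq a (fun _ => true) (by simpa only [List.countP_true] using h)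

variable [DecidableEq S]

theorem count_eq (hf : IsRCPK k f) (a : S) {x y : Fin k → List S}
    (h : ∀ i, (x i).count a = (y i).count a) : (f x).count a = (f y).count a :=
  hf.countP_eq a _ h

theorem length_replicate_add (hf : IsRCPK k f) {a b : S} (hab : a ≠ b) (n m : Fin k → ℕ) :
    (f fun i => List.replicate (n i + m i) a).length
      = (f fun i => List.replicate (n i) a).count a
        + (f fun i => List.replicate (m i) b).countP (· ≠ a) := by
  set x : Fin k → List S := fun i => List.replicate (n i) a ++ List.replicate (m i) b
  have h_count : (f x).count a = (f fun i => List.replicate (n i) a).count a :=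
    hf.count_eq a fun i => by simp [x, List.count_replicate, hab.symm]
  have h_countP : (f x).countP (· ≠ a) = (f fun i => List.replicate (m i) b).countP (· ≠ a) :=
    hf.countP_eq a _ fun i => by simp [x, List.countP_replicate, hab.symm]
  rw [hf.length_eq a (y := x) fun i => by simp [x], (f x).length_eq_count_add_countP_ne a,
    h_count, h_countP]

theorem exists_length_eq (hf : IsRCPK k f) {a b : S} (hab : a ≠ b) :
    ∃ p : Fin k → ℕ, ∀ x : Fin k → List S,
      (f x).length = ∑ i, p i * (x i).length + (f fun _ => []).length := by
  obtain ⟨p, hp⟩ := exists_eq_sum_mul_add_of_map_add_add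
    (fun n => (f fun i => List.replicate (n i) a).length) fun n m => by
      have h := hf.length_replicate_add hab
      have h₀ := h 0 0
      have hn := h n 0
      have hm := h 0 m
      simp only [Pi.add_apply, Pi.zero_apply, add_zero, zero_add] at h₀ hn hm ⊢
      rw [h n m]
      omega
  refine ⟨p, fun x => ?_⟩
  rw [hf.length_eq a (y := fun i => List.replicate (x i).length a) (by simp), hp]
  simp

theorem count_eq_sum_mul_add (hf : IsRCPK k f) {p : Fin k → ℕ}
    (hp : ∀ x : Fin k → List S,
      (f x).length = ∑ i, p i * (x i).length + (f fun _ => []).length)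
    (x : Fin k → List S) (a : S) :
    (f x).count a = ∑ i, p i * (x i).count a + (f fun _ => []).count a := by
  set y : Fin k → List S := fun i => List.replicate ((x i).count a) a
  have h_count : (f x).count a = (f y).count a := hf.count_eq a fun i => by simp [y]
  have h_countP : (f y).countP (· ≠ a) = (f fun _ => []).countP (· ≠ a) :=
    hf.countP_eq a _ fun i => by simp [y, List.countP_replicate]
  have h_length := hp y
  rw [(f y).length_eq_count_add_countP_ne a, (f fun _ => []).length_eq_count_add_countP_ne a,
    h_countP] at h_length
  have h_sum : ∑ i, p i * (y i).length = ∑ i, p i * (x i).count a := by simp [y]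
  omega

end IsRCPK

/-- If `S` has at least two letters and `f : (S*)ᵏ → S*` is RCP, then there are naturals
`p₁, …, p_k` (and `e_f = |f(ε,…,ε)|`) such that
`|f x| = ∑ᵢ pᵢ |xᵢ| + e_f`, `|f x|_a = ∑ᵢ pᵢ |xᵢ|_a + |f(ε,…,ε)|_a`, and for every letter `a`,
`pᵢ = |f(ε,…,a,…,ε)| − |f(ε,…,ε)|` (with `a` in the `i`-th position). -/
theorem stmt_14 {S : Type*} [DecidableEq S] (hS : ∃ a b : S, a ≠ b) (k : ℕ)
    (f : (Fin k → List S) → List S) (hf : IsRCPK k f) :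
    ∃ p : Fin k → ℕ,
      (∀ x : Fin k → List S,
        (f x).length = (∑ i, p i * (x i).length) + (f fun _ => []).length) ∧
      (∀ x : Fin k → List S, ∀ a : S,
        (f x).count a = (∑ i, p i * (x i).count a) + (f fun _ => []).count a) ∧
      (∀ a : S, ∀ i : Fin k,
        (f (Function.update (fun _ => ([] : List S)) i [a])).length
          = p i + (f fun _ => []).length) := by
  obtain ⟨a, b, hab⟩ := hS
  obtain ⟨p, hp⟩ := hf.exists_length_eq hab
  refine ⟨p, hp, hf.count_eq_sum_mul_add hp, fun c i => ?_⟩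
  rw [hp]
  simp [Function.update_apply, apply_ite]
end

section
/- Assume Σ has at least 3 elements and k ≥ 1. A function f : (Σ*)ᵏ → Σ* is congruence preserving if and only if there exist n ∈ ℕ, words w₀, …, wₙ ∈ Σ*, indices i₁, …, iₙ ∈ {1, …, k}, and exponents p₁, …, pₙ ∈ ℕ such that for all x₁, …, x_k ∈ Σ*: f(x₁, …, x_k) = w₀ x_{i₁}^{p₁} w₁ x_{i₂}^{p₂} w₂ ⋯ x_{iₙ}^{pₙ} wₙ. -/
/-!
Polynomial functions preserve congruences since congruences are compatible with concatenation.

Conversely, let `f` be congruence preserving and `a, b, c` distinct letters. For `N > k` the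
markers `aᴺ b aⁱ⁺¹ b` (`i < k`) never overlap, so rewriting each marker `i` to `x i` is confluent;
its congruence relates `f (markers)` to `f x`, and words shorter than `N` are normal forms.
With `x i = c` and `N` large, `f (markers)` rewrites to the normal form `H = f (c, …, c)`, and as
`c` occurs in no marker, `f (markers)` is a template `w₀ _ w₁ ⋯ _ wₙ` filled with markers whose
filling with `c` is `H`. Only finitely many templates fill to `H`, so one template `σ` serves for
infinitely many `N`. Given `x`, pick such an `N` exceeding the lengths of `f x` and of `σ` filled
with `x`: both words are normal forms of the class of `f (markers)`, hence equal.
-/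

open Relation Filter

lemma List.finite_length_le_and_forall_mem {α : Type*} {s : Set α} (hs : s.Finite) (n : ℕ) :
    {l : List α | l.length ≤ n ∧ ∀ x ∈ l, x ∈ s}.Finite := by
  have := hs.to_subtype
  refine ((List.finite_length_le s n).image (List.map Subtype.val)).subset ?_
  rintro l ⟨hl, hmem⟩
  lift l to List s using hmem
  exact ⟨l, by simpa using hl, rfl⟩

namespace CongruencePreserving

variable {S : Type*} {k : ℕ}

def marker (a b : S) (N i : ℕ) : List S :=
  List.replicate N a ++ b :: (List.replicate (i + 1) a ++ [b])

section Marker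

variable {a b : S} {N i : ℕ}

@[simp]
lemma length_marker : (marker a b N i).length = N + i + 3 := by
  simp only [marker, List.length_append, List.length_replicate, List.length_cons, List.length_nil]
  omega

lemma marker_getElem?_of_lt {q : ℕ} (hq : q < N) : (marker a b N i)[q]? = some a := by
  simp [marker, List.getElem?_append, hq]

lemma marker_getElem?_self : (marker a b N i)[N]? = some b := by
  simp [marker]

lemma marker_getElem?_of_lt_of_le {q : ℕ} (h₁ : N < q) (h₂ : q ≤ N + i + 1) :
    (marker a b N i)[q]? = some a := by
  simp only [marker, List.getElem?_append, List.getElem?_cons, List.getElem?_replicate,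
    List.length_replicate]
  split_ifs <;> first | rfl | omega

lemma marker_getElem?_last : (marker a b N i)[N + i + 2]? = some b := by
  simp only [marker, List.getElem?_append, List.getElem?_cons, List.getElem?_replicate,
    List.length_replicate]
  split_ifs <;> first | rfl | omega

lemma not_mem_marker {c : S} (hac : a ≠ c) (hbc : b ≠ c) : c ∉ marker a b N i := by
  simp [marker, List.mem_replicate, hac.symm, hbc.symm]

lemma eq_of_marker_append_eq_marker_append (hab : a ≠ b) {j : ℕ} {s s' : List S}
    (h : marker a b N i ++ s = marker a b N j ++ s') : i = j := by
  wlog hij : i < j generalizing i j s s'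
  · by_contra hne
    exact hne (this h.symm (by omega)).symm
  have hpos := congrArg (·[N + i + 2]?) h
  have hi' : N + i + 2 < (marker a b N i).length := by rw [length_marker]; omega
  have hj' : N + i + 2 < (marker a b N j).length := by rw [length_marker]; omega
  simp only [List.getElem?_append_left hi', List.getElem?_append_left hj', marker_getElem?_last,
    marker_getElem?_of_lt_of_le (by omega : N < N + i + 2) (by omega : N + i + 2 ≤ N + j + 1),
    Option.some.injEq] at hpos
  exact absurd hpos.symm hab

/-- Every proper suffix of a marker has a `b` less than `N` letters from its start, whereas every
marker starts with `a ^ N`. -/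
lemma not_marker_suffix_prefix (hab : a ≠ b) (hi : i + 1 < N) {j : ℕ} {m e s s' : List S}
    (hm : m ≠ []) (he : e ≠ []) (h : marker a b N i = m ++ e)
    (h' : e ++ s = marker a b N j ++ s') : False := by
  have hlen : m.length + e.length = N + i + 3 := by simpa using (congrArg List.length h).symm
  have hm₁ := List.length_pos_iff.2 hm
  have he₁ := List.length_pos_iff.2 he
  obtain ⟨q, hqb, hmq, hqN⟩ : ∃ q, (marker a b N i)[q]? = some b ∧ m.length ≤ q ∧
      q < m.length + N ∧ q < N + i + 3 := by
    rcases le_or_gt m.length N with hmN | hmN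
    · exact ⟨N, marker_getElem?_self, hmN, by omega⟩
    · exact ⟨N + i + 2, marker_getElem?_last, by omega, by omega⟩
  rw [h, List.getElem?_append_right hmq] at hqb
  have hpos := congrArg (·[q - m.length]?) h'
  have hj : q - m.length < (marker a b N j).length := by rw [length_marker]; omega
  simp only [List.getElem?_append_left (by omega : q - m.length < e.length), hqb,
    List.getElem?_append_left hj, marker_getElem?_of_lt (by omega : q - m.length < N),
    Option.some.injEq] at hpos
  exact hab hpos.symm

/-- Two occurrences of markers in a word coincide or are disjoint. -/
lemma marker_overlap (hab : a ≠ b) (hi : i + 1 < N) {j : ℕ} {m s₁ s₂ : List S}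
    (h : marker a b N i ++ s₁ = m ++ (marker a b N j ++ s₂)) :
    (m = [] ∧ i = j ∧ s₁ = s₂) ∨
      ∃ m', m = marker a b N i ++ m' ∧ s₁ = m' ++ (marker a b N j ++ s₂) := by
  rcases List.append_eq_append_iff.1 h with ⟨m', hm', hs⟩ | ⟨e, hme, he⟩
  · exact .inr ⟨m', hm', hs⟩
  rcases eq_or_ne m [] with rfl | hm
  · obtain rfl := eq_of_marker_append_eq_marker_append hab h
    exact .inl ⟨rfl, rfl, List.append_cancel_left h⟩
  rcases eq_or_ne e [] with rfl | he'
  · exact .inr ⟨[], by simpa using hme.symm, by simpa using he.symm⟩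
  exact (not_marker_suffix_prefix hab hi hm he' hme he.symm).elim

end Marker

section Rewriting

variable {a b : S} {N : ℕ} {x : Fin k → List S}

def MarkerStep (a b : S) (N : ℕ) (x : Fin k → List S) (z z' : List S) : Prop :=
  ∃ (p s : List S) (i : Fin k), z = p ++ (marker a b N i ++ s) ∧ z' = p ++ (x i ++ s)

lemma MarkerStep.append_left {z z' : List S} (u : List S) (h : MarkerStep a b N x z z') :
    MarkerStep a b N x (u ++ z) (u ++ z') := by
  obtain ⟨p, s, i, rfl, rfl⟩ := h
  exact ⟨u ++ p, s, i, by simp, by simp⟩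

lemma MarkerStep.append_right {z z' : List S} (u : List S) (h : MarkerStep a b N x z z') :
    MarkerStep a b N x (z ++ u) (z' ++ u) := by
  obtain ⟨p, s, i, rfl, rfl⟩ := h
  exact ⟨p, s ++ u, i, by simp, by simp⟩

lemma markerStep_diamond_of_prefix (hab : a ≠ b) (hN : k < N) {p m s₁ s₂ : List S}
    {i j : Fin k} (h : marker a b N i ++ s₁ = m ++ (marker a b N j ++ s₂)) :
    ∃ w, ReflGen (MarkerStep a b N x) (p ++ (x i ++ s₁)) w ∧
      ReflGen (MarkerStep a b N x) (p ++ m ++ (x j ++ s₂)) w := by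
  rcases marker_overlap hab (by omega) h with ⟨rfl, hij, rfl⟩ | ⟨m', rfl, rfl⟩
  · obtain rfl := Fin.ext hij
    exact ⟨_, .refl, by simp [ReflGen.refl]⟩
  · refine ⟨p ++ (x i ++ (m' ++ (x j ++ s₂))), .single ⟨p ++ x i ++ m', s₂, j, ?_, ?_⟩,
      .single ⟨p, m' ++ (x j ++ s₂), i, ?_, ?_⟩⟩ <;> simp

lemma markerStep_diamond (hab : a ≠ b) (hN : k < N) {z z₁ z₂ : List S}
    (h₁ : MarkerStep a b N x z z₁) (h₂ : MarkerStep a b N x z z₂) :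
    ∃ w, ReflGen (MarkerStep a b N x) z₁ w ∧ ReflGen (MarkerStep a b N x) z₂ w := by
  obtain ⟨p₁, s₁, i, rfl, rfl⟩ := h₁
  obtain ⟨p₂, s₂, j, h, rfl⟩ := h₂
  rcases List.append_eq_append_iff.1 h with ⟨m, rfl, hm⟩ | ⟨m, rfl, hm⟩
  · exact markerStep_diamond_of_prefix hab hN hm
  · obtain ⟨w, h₂, h₁⟩ := markerStep_diamond_of_prefix (x := x) (p := p₂) hab hN hm
    exact ⟨w, by simpa using h₁, h₂⟩

lemma equivalence_join_markerStep (hab : a ≠ b) (hN : k < N) :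
    Equivalence (Join (ReflTransGen (MarkerStep a b N x))) :=
  equivalence_join_reflTransGen fun _ _ _ h₁ h₂ =>
    let ⟨w, hw₁, hw₂⟩ := markerStep_diamond hab hN h₁ h₂
    ⟨w, hw₁, hw₂.to_reflTransGen⟩

lemma isCong_join_markerStep (hab : a ≠ b) (hN : k < N) :
    IsCong (Join (ReflTransGen (MarkerStep a b N x))) := by
  refine ⟨equivalence_join_markerStep hab hN, ?_⟩
  rintro z y u v ⟨w, hzw, hyw⟩ ⟨w', huw, hvw⟩
  exact ⟨w ++ w',
    (hzw.lift (· ++ u) fun _ _ h => h.append_right u).trans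
      (huw.lift (w ++ ·) fun _ _ h => h.append_left w),
    (hyw.lift (· ++ v) fun _ _ h => h.append_right v).trans
      (hvw.lift (w ++ ·) fun _ _ h => h.append_left w)⟩

def IsNormal (a b : S) (N : ℕ) (x : Fin k → List S) (z : List S) : Prop :=
  ∀ z', ¬ MarkerStep a b N x z z'

lemma isNormal_of_length_lt {z : List S} (h : z.length < N) : IsNormal a b N x z := by
  rintro z' ⟨p, s, i, rfl, -⟩
  simp only [List.length_append, length_marker] at h
  omega

lemma eq_of_reflTransGen_of_isNormal {z z' : List S} (hz : IsNormal a b N x z)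
    (h : ReflTransGen (MarkerStep a b N x) z z') : z' = z := by
  rcases h.cases_head with rfl | ⟨_, h, -⟩
  · rfl
  · exact (hz _ h).elim

lemma reflTransGen_of_join_of_isNormal {z z' : List S} (hz' : IsNormal a b N x z')
    (h : Join (ReflTransGen (MarkerStep a b N x)) z z') :
    ReflTransGen (MarkerStep a b N x) z z' := by
  obtain ⟨w, hzw, hz'w⟩ := h
  rwa [eq_of_reflTransGen_of_isNormal hz' hz'w] at hzw

lemma eq_of_join_of_isNormal {z z' : List S} (hz : IsNormal a b N x z) (hz' : IsNormal a b N x z')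
    (h : Join (ReflTransGen (MarkerStep a b N x)) z z') : z = z' :=
  (eq_of_reflTransGen_of_isNormal hz (reflTransGen_of_join_of_isNormal hz' h)).symm

end Rewriting

def fill (g : Fin k → List S) (w : List S) (L : List (Fin k × List S)) : List S :=
  w ++ (L.map fun e => g e.1 ++ e.2).flatten

section Fill

variable {g : Fin k → List S}

@[simp]
lemma fill_nil (w : List S) : fill g w [] = w := by
  simp [fill]

@[simp]
lemma fill_cons (w : List S) (i : Fin k) (u : List S) (L : List (Fin k × List S)) :
    fill g w ((i, u) :: L) = w ++ (g i ++ fill g u L) := by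
  simp [fill]

lemma sublist_fill (w : List S) (L : List (Fin k × List S)) : w.Sublist (fill g w L) :=
  List.sublist_append_left _ _

lemma sublist_fill_of_mem {e : Fin k × List S} {L : List (Fin k × List S)} (he : e ∈ L)
    (w : List S) : e.2.Sublist (fill g w L) := by
  induction L generalizing w with
  | nil => simp at he
  | cons e' L ih =>
    obtain ⟨i, u⟩ := e'
    rw [fill_cons]
    rcases List.mem_cons.1 he with rfl | he
    · exact (sublist_fill (g := g) u L).trans (by simp)
    · exact (ih he u).trans (by simp)

lemma length_le_length_fill (hg : ∀ i, g i ≠ []) (w : List S) (L : List (Fin k × List S)) :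
    L.length ≤ (fill g w L).length := by
  induction L generalizing w with
  | nil => simp
  | cons e L ih =>
    obtain ⟨i, u⟩ := e
    have := List.length_pos_iff.2 (hg i)
    simp only [fill_cons, List.length_append, List.length_cons]
    have := ih u
    omega

lemma finite_setOf_fill_eq (hg : ∀ i, g i ≠ []) (H : List S) :
    {σ : List S × List (Fin k × List S) | fill g σ.1 σ.2 = H}.Finite := by
  have hA : {u : List S | u.Sublist H}.Finite :=
    H.sublists.finite_toSet.subset fun u hu => List.mem_sublists.2 hu
  refine (hA.prod (List.finite_length_le_and_forall_mem (Set.finite_univ.prod hA)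
    H.length)).subset ?_
  rintro ⟨w, L⟩ rfl
  exact ⟨sublist_fill w L, length_le_length_fill hg w L,
    fun e he => ⟨trivial, sublist_fill_of_mem he w⟩⟩

lemma polyFormK_of_forall_eq_fill (hk : 0 < k) {f : (Fin k → List S) → List S}
    {w : List S} {L : List (Fin k × List S)} (hf : ∀ x, f x = fill x w L) : PolyFormK k f := by
  let d : Fin k × List S := (⟨0, hk⟩, [])
  refine ⟨L.length, fun | 0 => w | j + 1 => (L.getD j d).2, fun j => (L.getD (j - 1) d).1,
    fun _ => 1, fun x => ?_⟩
  have hrange : ∀ F : Fin k × List S → List S,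
      (List.range L.length).map (fun j => F (L.getD j d)) = L.map F := by
    intro F
    apply List.ext_getElem <;> simp +contextual
  rw [hf, fill]
  simpa using congrArg (w ++ List.flatten ·) (hrange fun e => x e.1 ++ e.2).symm

lemma reflTransGen_fill_marker (a b : S) (N : ℕ) (x : Fin k → List S) (w : List S)
    (L : List (Fin k × List S)) :
    ReflTransGen (MarkerStep a b N x) (fill (fun i => marker a b N i) w L) (fill x w L) := by
  induction L generalizing w with
  | nil => exact .refl
  | cons e L ih =>
    obtain ⟨i, u⟩ := e
    simp only [fill_cons]
    exact .head ⟨w, _, i, rfl, rfl⟩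
      ((ih u).lift (fun z => w ++ (x i ++ z)) fun _ _ h => (h.append_left (x i)).append_left w)

lemma eq_append_or_eq_append_of_not_mem {c : S} {m w F p s : List S} (hcm : c ∉ m)
    (h : w ++ c :: F = p ++ (m ++ s)) :
    (∃ v, w = p ++ (m ++ v) ∧ s = v ++ c :: F) ∨ (∃ v, p = w ++ c :: v ∧ F = v ++ (m ++ s)) := by
  rcases List.append_eq_append_iff.1 h with ⟨v, rfl, h'⟩ | ⟨v, rfl, h'⟩
  · rcases List.cons_eq_append_iff.1 h' with ⟨rfl, h''⟩ | ⟨v', rfl, rfl⟩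
    · rcases List.append_eq_cons_iff.1 h'' with ⟨rfl, rfl⟩ | ⟨m', rfl, -⟩
      · exact .inl ⟨[], by simp, by simp⟩
      · simp at hcm
    · exact .inr ⟨v', rfl, rfl⟩
  · rcases List.append_eq_append_iff.1 h' with ⟨v', rfl, rfl⟩ | ⟨v', rfl, h''⟩
    · exact .inl ⟨v', by simp, rfl⟩
    · rcases List.cons_eq_append_iff.1 h'' with ⟨rfl, rfl⟩ | ⟨m', rfl, -⟩
      · exact .inl ⟨[], by simp, by simp⟩
      · simp at hcm

/-- Since `c ∉ m`, an occurrence of `m` lies inside one of the pieces `w`, `wⱼ`; that piece is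
split there by a new hole `i`. -/
lemma exists_fill_split {c : S} {m : List S} (hcm : c ∉ m) (i : Fin k) {w p s : List S}
    {L : List (Fin k × List S)} (h : fill (fun _ => [c]) w L = p ++ (m ++ s)) :
    ∃ w' L', (∀ g : Fin k → List S, g i = m → fill g w' L' = fill g w L) ∧
      fill (fun _ => [c]) w' L' = p ++ c :: s := by
  induction L generalizing w p with
  | nil => exact ⟨p, [(i, s)], fun g hg => by simp [hg, ← h], by simp⟩
  | cons e L ih =>
    obtain ⟨j, u⟩ := e
    simp only [fill_cons, List.singleton_append] at h
    rcases eq_append_or_eq_append_of_not_mem hcm h with ⟨v, rfl, rfl⟩ | ⟨v, rfl, hF⟩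
    · exact ⟨p, (i, v) :: (j, u) :: L, fun g hg => by simp [hg], by simp⟩
    · obtain ⟨w', L', hg, hc⟩ := ih hF
      exact ⟨w, (j, w') :: L', fun g hgi => by simp [hg g hgi], by simp [hc]⟩

lemma exists_fill_of_reflTransGen {a b c : S} {N : ℕ} (hc : ∀ i : Fin k, c ∉ marker a b N i)
    {z z' : List S} (h : ReflTransGen (MarkerStep a b N fun _ : Fin k => [c]) z z') :
    ∃ w L, z' = fill (fun _ : Fin k => [c]) w L ∧ fill (fun i => marker a b N i) w L = z := by
  induction h with
  | refl => exact ⟨z, [], by simp, by simp⟩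
  | tail _ hstep ih =>
    obtain ⟨w, L, rfl, rfl⟩ := ih
    obtain ⟨p, s, i, hy, rfl⟩ := hstep
    obtain ⟨w', L', hg, hfill⟩ := exists_fill_split (hc i) i hy
    exact ⟨w', L', by simpa using hfill.symm, hg _ rfl⟩

end Fill

lemma IsCong.rel_flatten_map {r : List S → List S → Prop} (hr : IsCong r) {ι : Type*}
    (l : List ι) {F G : ι → List S} (h : ∀ j ∈ l, r (F j) (G j)) :
    r (l.map F).flatten (l.map G).flatten := by
  induction l with
  | nil => exact hr.1.refl _
  | cons j l ih =>
    simpa using hr.2 _ _ _ _ (h j List.mem_cons_self)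
      (ih fun j hj => h j (List.mem_cons_of_mem _ hj))

theorem isCPK_of_polyFormK {f : (Fin k → List S) → List S} (hf : PolyFormK k f) : IsCPK k f := by
  obtain ⟨n, w, idx, p, hform⟩ := hf
  intro r hr x y hxy
  rw [hform x, hform y]
  refine hr.2 _ _ _ _ (hr.1.refl _)
    (IsCong.rel_flatten_map hr _ fun j _ => hr.2 _ _ _ _ ?_ (hr.1.refl _))
  simpa using IsCong.rel_flatten_map hr (List.replicate (p (j + 1)) (idx (j + 1))) fun i _ => hxy i

theorem polyFormK_of_isCPK {c₁ c₂ c₃ : S} (h12 : c₁ ≠ c₂) (h13 : c₁ ≠ c₃) (h23 : c₂ ≠ c₃)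
    (hk : 0 < k) {f : (Fin k → List S) → List S} (hf : IsCPK k f) : PolyFormK k f := by
  set markers : ℕ → Fin k → List S := fun N i => marker c₁ c₂ N i
  have hjoin : ∀ N, k < N → ∀ x,
      Join (ReflTransGen (MarkerStep c₁ c₂ N x)) (f (markers N)) (f x) :=
    fun N hN x => hf _ (isCong_join_markerStep h12 hN) _ _ fun i =>
      ⟨x i, .single ⟨[], [], i, by simp [markers], by simp⟩, .refl⟩
  set H := f fun _ => [c₃]
  have hev : ∀ᶠ N in atTop, ∃ σ ∈ {σ : List S × List (Fin k × List S) |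
      fill (fun _ => [c₃]) σ.1 σ.2 = H}, f (markers N) = fill (markers N) σ.1 σ.2 := by
    filter_upwards [eventually_gt_atTop (k + H.length)] with N hN
    have hHnormal : IsNormal c₁ c₂ N (fun _ : Fin k => [c₃]) H := isNormal_of_length_lt (by omega)
    obtain ⟨w, L, hH, hmarkers⟩ := exists_fill_of_reflTransGen (fun i => not_mem_marker h13 h23)
      (reflTransGen_of_join_of_isNormal hHnormal (hjoin N (by omega) _))
    exact ⟨(w, L), hH.symm, hmarkers.symm⟩
  obtain ⟨σ, -, hσ⟩ :=
    (finite_setOf_fill_eq (by simp) H).frequently_exists.1 hev.frequently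
  refine polyFormK_of_forall_eq_fill hk (w := σ.1) (L := σ.2) fun x => ?_
  obtain ⟨N, hNσ, hN⟩ := (hσ.and_eventually (eventually_gt_atTop
    (k + (f x).length + (fill x σ.1 σ.2).length))).exists
  have hequiv := equivalence_join_markerStep (x := x) h12 (by omega : k < N)
  refine eq_of_join_of_isNormal (isNormal_of_length_lt (by omega))
    (isNormal_of_length_lt (by omega)) (hequiv.trans (hequiv.symm (hjoin N (by omega) x)) ?_)
  rw [hNσ]
  exact ⟨_, reflTransGen_fill_marker c₁ c₂ N x σ.1 σ.2, .refl⟩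

end CongruencePreserving

/-- If `S` has at least 3 elements and `k ≥ 1`, a function `f : (S*)ᵏ → S*` is congruence
preserving iff it is of the form
`f (x₁, …, x_k) = w₀ x_{i₁}^{p₁} w₁ x_{i₂}^{p₂} w₂ ⋯ x_{iₙ}^{pₙ} wₙ`. -/
theorem stmt_16 {S : Type*} (c₁ c₂ c₃ : S) (h12 : c₁ ≠ c₂) (h13 : c₁ ≠ c₃) (h23 : c₂ ≠ c₃)
    (k : ℕ) (hk : 1 ≤ k) (f : (Fin k → List S) → List S) :
    IsCPK k f ↔ PolyFormK k f :=
  ⟨CongruencePreserving.polyFormK_of_isCPK h12 h13 h23 hk,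
    CongruencePreserving.isCPK_of_polyFormK⟩
end

section
/- Assume Σ is infinite and k ≥ 1. Every RCP function f : (Σ*)ᵏ → Σ* has the form f(x₁, …, x_k) = w₀ x_{i₁}^{p₁} w₁ x_{i₂}^{p₂} w₂ ⋯ x_{iₙ}^{pₙ} wₙ for some n ∈ ℕ, words w₀, …, wₙ ∈ Σ*, indices i₁, …, iₙ ∈ {1, …, k}, and exponents p₁, …, pₙ ∈ ℕ. -/
/-!
Choose distinct letters `c i` not occurring in `f (ε, …, ε)` and put `U = f (c₁, …, c_k)`.
Then `f x` is `U` with every `c i` replaced by `x i`, which has the required form with all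
exponents `0` or `1`. To see this, take distinct letters `d i` fresh for everything in sight.
The substitution `d i ↦ x i` gives `f x = f (d₁, …, d_k)[d ↦ x]`. Erasing the `d i` shows that
`f (d₁, …, d_k)` contains no `c i`, so the renaming `d i ↦ c i`, which maps it to `U`, can be
inverted on it: `f (d₁, …, d_k) = U[c ↦ d]`.
-/

open Function

section Substitution

variable {S ι : Type*} {c d : ι → S}

noncomputable def substLetters (c : ι → S) (x : ι → List S) (w : List S) : List S :=
  w.flatMap (extend c x fun a => [a])

theorem isHom_substLetters (c : ι → S) (x : ι → List S) : IsHom (substLetters c x) :=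
  ⟨rfl, fun _ _ => List.flatMap_append⟩

theorem substLetters_singleton (hc : Injective c) (x : ι → List S) (i : ι) :
    substLetters c x [c i] = x i := by
  simp [substLetters, hc.extend_apply]

theorem extend_apply_of_forall_ne (x : ι → List S) {a : S} (ha : ∀ i, c i ≠ a) :
    extend c x (fun a => [a]) a = [a] :=
  extend_apply' _ _ _ fun ⟨i, hi⟩ => ha i hi

theorem substLetters_eq_self (x : ι → List S) {w : List S} (hw : ∀ i, c i ∉ w) :
    substLetters c x w = w := by
  rw [substLetters, List.flatMap_congr (g := fun a => [a]), List.flatMap_singleton']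
  exact fun a ha => extend_apply_of_forall_ne x fun i hi => hw i (hi ▸ ha)

theorem substLetters_singletons_self (hc : Injective c) (w : List S) :
    substLetters c (fun i => [c i]) w = w := by
  rw [substLetters, List.flatMap_congr (g := fun a => [a]), List.flatMap_singleton']
  intro a _
  by_cases h : ∃ i, c i = a
  · obtain ⟨i, rfl⟩ := h
    exact hc.extend_apply _ _ i
  · exact extend_apply' _ _ _ h

theorem mem_substLetters (x : ι → List S) {a : S} {w : List S} (ha : a ∈ w)
    (hac : ∀ i, c i ≠ a) : a ∈ substLetters c x w :=
  List.mem_flatMap.2 ⟨a, ha, by simp [extend_apply_of_forall_ne x hac]⟩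

theorem substLetters_substLetters (hc : Injective c) (hd : Injective d) (x : ι → List S)
    {w : List S} (hw : ∀ i, d i ∉ w) :
    substLetters d x (substLetters c (fun i => [d i]) w) = substLetters c x w := by
  rw [substLetters, substLetters, List.flatMap_assoc, substLetters]
  refine List.flatMap_congr fun a ha => ?_
  by_cases h : ∃ i, c i = a
  · obtain ⟨i, rfl⟩ := h
    simp [hc.extend_apply, hd.extend_apply]
  · have had : ∀ i, d i ≠ a := fun i hi => hw i (hi ▸ ha)
    simp [extend_apply' _ _ _ h, extend_apply_of_forall_ne x had]

end Substitution

theorem exists_injective_forall_not_mem {S : Type*} [Infinite S] (k : ℕ) (L : List S) :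
    ∃ d : Fin k → S, Injective d ∧ ∀ i, d i ∉ L := by
  let e := (L.finite_toSet.infinite_compl).natEmbedding
  exact ⟨fun i => e i, fun i j hij => Fin.val_injective (e.injective (Subtype.val_injective hij)),
    fun i => (e i).2⟩

namespace IsRCPK

variable {S : Type*} {k : ℕ} {f : (Fin k → List S) → List S} {c d : Fin k → S}

theorem eq_substLetters_of_fresh (hf : IsRCPK k f) (hd : Injective d) {x : Fin k → List S}
    (hdx : ∀ i j, d i ∉ x j) (hdf : ∀ i, d i ∉ f x) :
    f x = substLetters d x (f fun i => [d i]) := by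
  refine (substLetters_eq_self x hdf).symm.trans
    (hf _ (isHom_substLetters d x) _ _ fun j => ?_).symm
  rw [substLetters_singleton hd, substLetters_eq_self x fun i => hdx i j]

theorem apply_singletons_eq_substLetters (hf : IsRCPK k f) (hc : Injective c) (hd : Injective d)
    (hdc : ∀ i j, d i ≠ c j) (hcE : ∀ i, c i ∉ f fun _ => [])
    (hdE : ∀ i, d i ∉ f fun _ => []) (hdU : ∀ i, d i ∉ f fun i => [c i]) :
    f (fun i => [d i]) = substLetters c (fun i => [d i]) (f fun i => [c i]) := by
  set V := f fun i => [d i]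
  have hrename : substLetters d (fun i => [c i]) V = f fun i => [c i] := by
    refine (hf _ (isHom_substLetters d _) _ _ fun j => ?_).trans (substLetters_eq_self _ hdU)
    rw [substLetters_singleton hd, substLetters_eq_self _ (by simpa using fun i => hdc i j)]
  have herase : substLetters d (fun _ => []) V = f fun _ => [] :=
    (hf _ (isHom_substLetters d _) _ _ fun j => substLetters_singleton hd _ j).trans
      (substLetters_eq_self _ hdE)
  -- `V` contains no letter `c i`: erasing the `d i` would leave it in `f (ε, …, ε)`
  have hcV : ∀ i, c i ∉ V := fun i hi =>
    hcE i (herase ▸ mem_substLetters _ hi fun j => hdc j i)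
  rw [← hrename, substLetters_substLetters hd hc _ hcV, substLetters_singletons_self hd]

theorem eq_substLetters [Infinite S] (hf : IsRCPK k f) (hc : Injective c)
    (hcE : ∀ i, c i ∉ f fun _ => []) (x : Fin k → List S) :
    f x = substLetters c x (f fun i => [c i]) := by
  set U := f fun i => [c i]
  obtain ⟨d, hd, hfresh⟩ := exists_injective_forall_not_mem k
    (U ++ List.ofFn c ++ (f fun _ => []) ++ (List.ofFn x).flatten ++ f x)
  have hdU : ∀ i, d i ∉ U := fun i h => hfresh i (by simp [h])
  have hdc : ∀ i j, d i ≠ c j := fun i j h => hfresh i (by simp [h])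
  have hdE : ∀ i, d i ∉ f fun _ => [] := fun i h => hfresh i (by simp [h])
  have hdx : ∀ i j, d i ∉ x j := fun i j h => hfresh i (by simp [List.mem_flatten]; grind)
  have hdf : ∀ i, d i ∉ f x := fun i h => hfresh i (by simp [h])
  rw [hf.eq_substLetters_of_fresh hd hdx hdf,
    hf.apply_singletons_eq_substLetters hc hd hdc hcE hdE hdU,
    substLetters_substLetters hc hd x hdU]

end IsRCPK

theorem List.map_getD_range {α : Type*} (l : List α) (a : α) :
    (List.range l.length).map (l.getD · a) = l := by
  refine List.ext_getElem (by simp) fun i _ hi => ?_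
  simp [List.getElem?_eq_getElem hi]

theorem polyFormK_flatMap {S : Type*} {k : ℕ} (U : List S) (a₀ : S) (idx : S → Fin k)
    (p : S → ℕ) (w : S → List S) :
    PolyFormK k fun x => U.flatMap fun a => (List.replicate (p a) (x (idx a))).flatten ++ w a := by
  refine ⟨U.length, fun | 0 => [] | j + 1 => w (U.getD j a₀),
    fun t => idx (U.getD (t - 1) a₀), fun t => p (U.getD (t - 1) a₀), fun x => ?_⟩
  conv_lhs => rw [← U.map_getD_range a₀]
  simp [List.flatMap_def, comp_def]

theorem polyFormK_substLetters {S : Type*} {k : ℕ} (hk : 1 ≤ k) {c : Fin k → S}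
    (hc : Injective c) (U : List S) : PolyFormK k fun x => substLetters c x U := by
  have hletterwise : ∀ x : Fin k → List S, substLetters c x U = U.flatMap fun a =>
      (List.replicate (extend c (fun _ => 1) (fun _ => 0) a)
        (x (extend c id (fun _ => ⟨0, hk⟩) a))).flatten ++
      extend c (fun _ => []) (fun a => [a]) a := by
    intro x
    refine List.flatMap_congr fun a _ => ?_
    by_cases h : ∃ i, c i = a
    · obtain ⟨i, rfl⟩ := h
      simp [hc.extend_apply]
    · simp [extend_apply' _ _ _ h]
  rw [funext hletterwise]
  exact polyFormK_flatMap U (c ⟨0, hk⟩) _ _ _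

/-- If `S` is infinite and `k ≥ 1`, every RCP function `f : (S*)ᵏ → S*` is of the form
`f (x₁, …, x_k) = w₀ x_{i₁}^{p₁} w₁ x_{i₂}^{p₂} w₂ ⋯ x_{iₙ}^{pₙ} wₙ`. -/
theorem stmt_19 {S : Type*} [Infinite S] (k : ℕ) (hk : 1 ≤ k)
    (f : (Fin k → List S) → List S) (hf : IsRCPK k f) : PolyFormK k f := by
  obtain ⟨c, hc, hcE⟩ := exists_injective_forall_not_mem k (f fun _ => [])
  rw [show f = fun x => substLetters c x (f fun i => [c i]) from funext (hf.eq_substLetters hc hcE)]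
  exact polyFormK_substLetters hk hc _
end
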